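/- arXiv:2503.09583 — 5 statements merged into one kernel-verified Lean document; each statement's English description precedes it below -/
import Mathlib

section
/- For every x ∈ R^d, every t > 0, and every realization of the training data, the Jacobian matrix J_{ŝ_t}(x) of the soft-thresholded kernel score estimator ŝ_t satisfies J_{ŝ_t}(x) + (1/t)·I_d ⪰ 0 (positive semidefinite). Consequently, for the induced estimator ŝ_{X_k}(x) := ŝ_{t_k}(x/√ᾱ_k)/√ᾱ_k with t_k := (1−ᾱ_k)/ᾱ_k + τ, one has J_{ŝ_{X_k}}(x) + (1−ᾱ_k)^{−1} I_d ⪰ 0 for all x ∈ R^d and k ∈ [K]. -/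
open MeasureTheory ProbabilityTheory Real
open scoped InnerProductSpace ENNReal NNReal BigOperators

noncomputable section

/-- `ℝ^d` with the Euclidean norm. -/
abbrev Vec (d : ℕ) := EuclideanSpace ℝ (Fin d)

/-- Density `φ_t` of the Gaussian `N(0, t I_d)` on `ℝ^d`. -/
def gaussKernel (d : ℕ) (t : ℝ) (x : Vec d) : ℝ :=
  (2 * π * t) ^ (-(d : ℝ) / 2) * Real.exp (-‖x‖ ^ 2 / (2 * t))

/-- The standard Gaussian `N(0, I_d)` on `ℝ^d`. -/
def stdGaussian (d : ℕ) : Measure (Vec d) :=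
  (Measure.pi fun _ : Fin d => gaussianReal 0 1).map (EuclideanSpace.equiv (Fin d) ℝ).symm

/-- Law of `Z_t = Z₀ + √t · W` where `Z₀ ∼ P` and `W ∼ N(0, I_d)` independent. -/
def lawVE {d : ℕ} (P : Measure (Vec d)) (t : ℝ) : Measure (Vec d) :=
  (P.prod (stdGaussian d)).map fun p => p.1 + Real.sqrt t • p.2

/-- Density `p_t = φ_t ∗ p₀` of `Z_t`. -/
def densVE {d : ℕ} (P : Measure (Vec d)) (t : ℝ) (x : Vec d) : ℝ :=
  ∫ y, gaussKernel d t (x - y) ∂P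

/-- Score function `∇ log f` associated with a density `f`. -/
def scoreOf {d : ℕ} (f : Vec d → ℝ) (x : Vec d) : Vec d :=
  (f x)⁻¹ • gradient f x

/-- Score function `s_t` of `Z_t`. -/
def scoreVE {d : ℕ} (P : Measure (Vec d)) (t : ℝ) : Vec d → Vec d :=
  scoreOf (densVE P t)

/-- Gaussian kernel density estimator `p̂_t` built from data `X`. -/
def kde {d n : ℕ} (t : ℝ) (X : Fin n → Vec d) (x : Vec d) : ℝ :=
  (n : ℝ)⁻¹ * ∑ i, gaussKernel d t (X i - x)

/-- Threshold `η_t = log n / (n (2πt)^{d/2})`. -/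
def etaThr (d n : ℕ) (t : ℝ) : ℝ :=
  Real.log n / (n * (2 * π * t) ^ ((d : ℝ) / 2))

/-- The soft-thresholding function `ψ(x; η)`. -/
def softThresh (η x : ℝ) : ℝ :=
  if η ≤ x then 1
  else if x ≤ η / 2 then 0
  else (1 + Real.exp ((1 - 2 * (2 * x / η - 1)) /
      ((2 * x / η - 1) * (2 - 2 * x / η))))⁻¹

/-- Soft-thresholded kernel score estimator `ŝ_t`. -/
def scoreEst {d n : ℕ} (t : ℝ) (X : Fin n → Vec d) (x : Vec d) : Vec d :=
  (softThresh (etaThr d n t) (kde t X x) / kde t X x) • gradient (kde t X) x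

/-- Cumulative learning rates `ᾱ_k` of the schedule. -/
def abar (K : ℕ) (c0 c1 : ℝ) : ℕ → ℝ
  | 0 => 1
  | 1 => 1 - (K : ℝ) ^ (-c0)
  | k + 2 =>
      abar K c0 c1 (k + 1) -
        c1 * Real.log K / K * (abar K c0 c1 (k + 1) * (1 - abar K c0 c1 (k + 1)))

/-- Learning rates `α_k = ᾱ_k / ᾱ_{k-1}`. -/
def alphak (K : ℕ) (c0 c1 : ℝ) (k : ℕ) : ℝ :=
  abar K c0 c1 k / abar K c0 c1 (k - 1)

/-- Law of `√a · X₀ + √(1-a) · W` where `X₀ ∼ P0` and `W ∼ N(0, I_d)` independent. -/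
def forwardLaw {d : ℕ} (P0 : Measure (Vec d)) (a : ℝ) : Measure (Vec d) :=
  (P0.prod (stdGaussian d)).map fun p => Real.sqrt a • p.1 + Real.sqrt (1 - a) • p.2

/-- Density of `√a · X₀ + √(1-a) · W`. -/
def densForward {d : ℕ} (P0 : Measure (Vec d)) (a : ℝ) (x : Vec d) : ℝ :=
  ∫ y, gaussKernel d (1 - a) (x - Real.sqrt a • y) ∂P0

/-- One step of the probability flow ODE sampler:
`y ↦ (1/√α) (y + ((1-α)/2) ŝ(y))`. -/
def samplerStep {d : ℕ} (α : ℝ) (shat : Vec d → Vec d) (y : Vec d) : Vec d :=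
  (Real.sqrt α)⁻¹ • (y + ((1 - α) / 2) • shat y)

/-- `runSampler α shat K y` is the value `Y₁` of the sampler started at `Y_K = y`. -/
def runSampler {d : ℕ} (α : ℕ → ℝ) (shat : ℕ → Vec d → Vec d) : ℕ → Vec d → Vec d
  | 0, y => y
  | 1, y => y
  | k + 2, y => runSampler α shat (k + 1) (samplerStep (α (k + 2)) (shat (k + 2)) y)

/-- Total variation distance between two measures. -/
def tvDist {Ω : Type*} [MeasurableSpace Ω] (μ ν : Measure Ω) : ℝ :=
  ⨆ s : { s : Set Ω // MeasurableSet s }, |(μ s.1).toReal - (ν s.1).toReal|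

/-- `P` is a `σ`-subgaussian distribution on `ℝ^d`. -/
def IsSubgaussian {d : ℕ} (σ : ℝ) (P : Measure (Vec d)) : Prop :=
  ∀ θ : Vec d, ‖θ‖ = 1 → ∫ x, Real.exp ((⟪x, θ⟫_ℝ / σ) ^ 2) ∂P ≤ 2

/-- `f` is a `β`-Hölder smooth function with constant `L` (Assumption 2). -/
def HolderSmoothDensity {d : ℕ} (β L : ℝ) (f : Vec d → ℝ) : Prop :=
  ContDiff ℝ (⌈β⌉₊ - 1 : ℕ) f ∧
    ∀ m : ℕ, m ≤ ⌈β⌉₊ - 1 → ∀ x x' : Vec d,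
      ‖iteratedFDeriv ℝ m f x - iteratedFDeriv ℝ m f x'‖ ≤
        L * ‖x - x'‖ ^ (β - (⌈β⌉₊ - 1 : ℕ))

/-- Score estimator for the forward process: `ŝ_{X_k}(x) = ŝ_{t_k}(x/√ᾱ_k)/√ᾱ_k`
with `t_k = (1-ᾱ_k)/ᾱ_k + τ`. -/
def scoreEstX {d n : ℕ} (τ a : ℝ) (X : Fin n → Vec d) (x : Vec d) : Vec d :=
  (Real.sqrt a)⁻¹ • scoreEst ((1 - a) / a + τ) X ((Real.sqrt a)⁻¹ • x)

/-- Outer product `v v^⊤` as a continuous linear map. -/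
def outerCLM {d : ℕ} (v : Vec d) : Vec d →L[ℝ] Vec d :=
  (innerSL ℝ v).smulRight v

/-- Empirical matrix `Ĥ_t(x) = (1/(n t²)) Σᵢ (Xᵢ-x)(Xᵢ-x)^⊤ φ_t(Xᵢ-x)`. -/
def hHat {d n : ℕ} (t : ℝ) (X : Fin n → Vec d) (x : Vec d) : Vec d →L[ℝ] Vec d :=
  ((n : ℝ) * t ^ 2)⁻¹ • ∑ i, gaussKernel d t (X i - x) • outerCLM (X i - x)

/-- Population matrix `H_t(x) = (1/t²) E[(Z₀-x)(Z₀-x)^⊤ φ_t(Z₀-x)]`. -/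
def hBar {d : ℕ} (P : Measure (Vec d)) (t : ℝ) (x : Vec d) : Vec d →L[ℝ] Vec d :=
  (t ^ 2)⁻¹ • ∫ y, gaussKernel d t (y - x) • outerCLM (y - x) ∂P

/-- Empirical gradient `ĝ_t(x) = (1/(n t)) Σᵢ (Xᵢ-x) φ_t(Xᵢ-x)`. -/
def gHat {d n : ℕ} (t : ℝ) (X : Fin n → Vec d) (x : Vec d) : Vec d :=
  ((n : ℝ) * t)⁻¹ • ∑ i, gaussKernel d t (X i - x) • (X i - x)

/-- Population gradient `g_t(x) = (1/t) E[(Z₀-x) φ_t(Z₀-x)]`. -/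
def gBar {d : ℕ} (P : Measure (Vec d)) (t : ℝ) (x : Vec d) : Vec d :=
  t⁻¹ • ∫ y, gaussKernel d t (y - x) • (y - x) ∂P


section StatementThreeAux

open Filter

variable {d n : ℕ}

lemma gaussKernel_pos {t : ℝ} (ht : 0 < t) (z : Vec d) : 0 < gaussKernel d t z := by
  have h2 : (0:ℝ) < 2 * π * t := by positivity
  exact mul_pos (Real.rpow_pos_of_pos h2 _) (Real.exp_pos _)

lemma hasFDerivAt_gaussKernel (t : ℝ) (ht : 0 < t) (p x : Vec d) :
    HasFDerivAt (fun y : Vec d => gaussKernel d t (p - y))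
      ((gaussKernel d t (p - x) * t⁻¹) • innerSL ℝ (p - x)) x := by
  have hw : HasFDerivAt (fun y : Vec d => p - y) (-(ContinuousLinearMap.id ℝ (Vec d))) x :=
    (hasFDerivAt_id x).const_sub p
  have h2 : HasFDerivAt (fun y : Vec d => ‖p - y‖ ^ 2) ((-2 : ℝ) • innerSL ℝ (p - x)) x := by
    have h := hw.inner ℝ hw
    have hfun : (fun y : Vec d => ⟪p - y, p - y⟫_ℝ) = fun y : Vec d => ‖p - y‖ ^ 2 := by
      funext y; exact real_inner_self_eq_norm_sq _
    rw [hfun] at h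
    refine HasFDerivAt.congr_fderiv h ?_
    symm
    ext v
    simp only [ContinuousLinearMap.smul_apply, smul_eq_mul, ContinuousLinearMap.comp_apply,
      ContinuousLinearMap.prod_apply, fderivInnerCLM_apply, ContinuousLinearMap.neg_apply,
      ContinuousLinearMap.id_apply, innerSL_apply_apply, inner_neg_right, inner_neg_left]
    rw [real_inner_comm v]
    ring
  have h3 : HasFDerivAt (fun y : Vec d => (2 * t)⁻¹ * (-‖p - y‖ ^ 2))
      (((2 * t)⁻¹ * 2) • innerSL ℝ (p - x)) x := by
    have h := h2.neg.const_mul ((2 * t)⁻¹)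
    refine HasFDerivAt.congr_fderiv h ?_
    symm
    ext v
    simp [ContinuousLinearMap.smul_apply]
    ring
  have h5 := h3.exp.const_mul ((2 * π * t) ^ (-(d : ℝ) / 2))
  have hfun2 : (fun y : Vec d => (2 * π * t) ^ (-(d : ℝ) / 2) *
      Real.exp ((2 * t)⁻¹ * (-‖p - y‖ ^ 2))) = fun y : Vec d => gaussKernel d t (p - y) := by
    funext y
    simp only [gaussKernel, div_eq_inv_mul]
  rw [hfun2] at h5
  refine HasFDerivAt.congr_fderiv h5 ?_
  symm
  ext v
  simp only [ContinuousLinearMap.smul_apply, smul_eq_mul, gaussKernel, div_eq_inv_mul, mul_inv]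
  ring

lemma hasFDerivAt_kde (t : ℝ) (ht : 0 < t) (X : Fin n → Vec d) (x : Vec d) :
    HasFDerivAt (kde t X) (innerSL ℝ (gHat t X x)) x := by
  have hsum : HasFDerivAt (fun y : Vec d => ∑ i, gaussKernel d t (X i - y))
      (∑ i, (gaussKernel d t (X i - x) * t⁻¹) • innerSL ℝ (X i - x)) x :=
    HasFDerivAt.fun_sum fun i _ => hasFDerivAt_gaussKernel t ht (X i) x
  have h : HasFDerivAt (kde t X)
      ((n : ℝ)⁻¹ • ∑ i, (gaussKernel d t (X i - x) * t⁻¹) • innerSL ℝ (X i - x)) x :=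
    hsum.const_mul ((n : ℝ)⁻¹)
  convert h using 1
  ext v
  simp only [innerSL_apply_apply, gHat, real_inner_smul_left, sum_inner,
    ContinuousLinearMap.smul_apply, ContinuousLinearMap.sum_apply, smul_eq_mul,
    mul_inv, Finset.mul_sum]
  refine Finset.sum_congr rfl fun i _ => ?_
  ring

lemma gradient_kde (t : ℝ) (ht : 0 < t) (X : Fin n → Vec d) (y : Vec d) :
    gradient (kde t X) y = gHat t X y := by
  have h : HasGradientAt (kde t X) (gHat t X y) y := by
    rw [hasGradientAt_iff_hasFDerivAt]
    exact hasFDerivAt_kde t ht X y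
  exact h.gradient

lemma hasFDerivAt_gHat (t : ℝ) (ht : 0 < t) (X : Fin n → Vec d) (x : Vec d) :
    HasFDerivAt (gHat t X)
      (((n : ℝ) * t)⁻¹ • ∑ i,
        (gaussKernel d t (X i - x) • (-(ContinuousLinearMap.id ℝ (Vec d))) +
          ((gaussKernel d t (X i - x) * t⁻¹) • innerSL ℝ (X i - x)).smulRight (X i - x))) x := by
  have hterm : ∀ i ∈ Finset.univ, HasFDerivAt
      (fun y : Vec d => gaussKernel d t (X i - y) • (X i - y))
      (gaussKernel d t (X i - x) • (-(ContinuousLinearMap.id ℝ (Vec d))) +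
        ((gaussKernel d t (X i - x) * t⁻¹) • innerSL ℝ (X i - x)).smulRight (X i - x)) x :=
    fun i _ => (hasFDerivAt_gaussKernel t ht (X i) x).smul ((hasFDerivAt_id x).const_sub (X i))
  exact (HasFDerivAt.fun_sum hterm).const_smul (((n : ℝ) * t)⁻¹)

lemma softThresh_nonneg (η x : ℝ) : 0 ≤ softThresh η x := by
  unfold softThresh
  split_ifs
  · norm_num
  · norm_num
  · positivity

lemma softThresh_le_one (η x : ℝ) : softThresh η x ≤ 1 := by
  unfold softThresh
  split_ifs
  · norm_num
  · norm_num
  · have h : (1:ℝ) ≤ 1 + Real.exp ((1 - 2 * (2 * x / η - 1)) /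
        ((2 * x / η - 1) * (2 - 2 * x / η))) := by
      nlinarith [Real.exp_pos ((1 - 2 * (2 * x / η - 1)) / ((2 * x / η - 1) * (2 - 2 * x / η)))]
    exact inv_le_one_of_one_le₀ h

lemma cs_sum {n : ℕ} (k b : Fin n → ℝ) (hk : ∀ i, 0 ≤ k i) :
    (∑ i, k i * b i) ^ 2 ≤ (∑ i, k i) * ∑ i, k i * b i ^ 2 := by
  have h := Finset.sum_mul_sq_le_sq_mul_sq Finset.univ (fun i => Real.sqrt (k i))
    (fun i => Real.sqrt (k i) * b i)
  have e1 : ∀ i : Fin n, Real.sqrt (k i) * (Real.sqrt (k i) * b i) = k i * b i := fun i => by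
    rw [← mul_assoc, Real.mul_self_sqrt (hk i)]
  have e2 : ∀ i : Fin n, Real.sqrt (k i) ^ 2 = k i := fun i => Real.sq_sqrt (hk i)
  have e3 : ∀ i : Fin n, (Real.sqrt (k i) * b i) ^ 2 = k i * b i ^ 2 := fun i => by
    rw [mul_pow, e2]
  simp only [e1, e2, e3] at h
  exact h

lemma key_ineq (m t u₀ P S G N ψ D : ℝ) (hm : 0 < m) (ht : 0 < t) (hu : u₀ = m⁻¹ * P)
    (hP : 0 < P) (hS : 0 ≤ S) (hN : 0 ≤ N) (hCS : G * G ≤ P * S)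
    (hψ0 : 0 ≤ ψ) (hψ1 : ψ ≤ 1) (hD : 0 ≤ D) :
    0 ≤ ψ / u₀ * ((m * t)⁻¹ * (t⁻¹ * S - P * N)) +
        (D * u₀ - ψ * 1) / u₀ ^ 2 * ((m * t)⁻¹ * G) * ((m * t)⁻¹ * G) + t⁻¹ * N := by
  subst hu
  have h1 : 0 ≤ D * (G * G) / (m * P * t ^ 2) :=
    div_nonneg (mul_nonneg hD (mul_self_nonneg G)) (by positivity)
  have h2 : 0 ≤ ψ / (P ^ 2 * t ^ 2) * (P * S - G * G) :=
    mul_nonneg (div_nonneg hψ0 (by positivity)) (by linarith)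
  have h3 : 0 ≤ t⁻¹ * N * (1 - ψ) :=
    mul_nonneg (mul_nonneg (by positivity) hN) (by linarith)
  have key : ψ / (m⁻¹ * P) * ((m * t)⁻¹ * (t⁻¹ * S - P * N)) +
      (D * (m⁻¹ * P) - ψ * 1) / (m⁻¹ * P) ^ 2 * ((m * t)⁻¹ * G) * ((m * t)⁻¹ * G) + t⁻¹ * N
      = D * (G * G) / (m * P * t ^ 2) + ψ / (P ^ 2 * t ^ 2) * (P * S - G * G)
        + t⁻¹ * N * (1 - ψ) := by
    field_simp
    ring
  rw [key]
  linarith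

set_option maxHeartbeats 2000000 in
lemma psi_hasDerivAt (η u : ℝ) (hu : 0 < u) :
    ∃ D : ℝ, 0 ≤ D ∧ HasDerivAt (softThresh η) D u := by
  rcases lt_or_ge u η with hu1 | hu1
  · -- u < η, hence 0 < η
    have hη : 0 < η := lt_trans hu hu1
    rcases lt_or_ge u (η / 2) with hu2 | hu2
    · -- locally zero
      refine ⟨0, le_rfl, ?_⟩
      have hev : softThresh η =ᶠ[nhds u] fun _ => (0:ℝ) := by
        filter_upwards [Iio_mem_nhds hu2] with y hy
        have h1 : ¬ η ≤ y := by
          simp only [Set.mem_Iio] at hy; push_neg; linarith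
        have h2 : y ≤ η / 2 := le_of_lt hy
        simp [softThresh, h1, h2]
      exact (hasDerivAt_const u (0:ℝ)).congr_of_eventuallyEq hev
    · rcases eq_or_lt_of_le hu2 with heq | hu2
      · -- u = η / 2 : squeeze, derivative 0
        refine ⟨0, le_rfl, ?_⟩
        rw [← heq]
        rw [hasDerivAt_iff_isLittleO, Asymptotics.isLittleO_iff]
        intro c hc
        have hδ : 0 < min (η / 8) (c * η ^ 2 / 64) := lt_min (by positivity) (by positivity)
        have hψ0 : softThresh η (η / 2) = 0 := by
          rw [softThresh, if_neg (by push_neg; linarith), if_pos le_rfl]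
        filter_upwards [Metric.ball_mem_nhds (η / 2) hδ] with y hy
        rw [Metric.mem_ball, Real.dist_eq] at hy
        have hy1 : |y - η / 2| < η / 8 := lt_of_lt_of_le hy (min_le_left _ _)
        have hy2 : |y - η / 2| < c * η ^ 2 / 64 := lt_of_lt_of_le hy (min_le_right _ _)
        rw [smul_zero, sub_zero, hψ0, sub_zero, Real.norm_eq_abs, Real.norm_eq_abs]
        rcases le_or_gt y (η / 2) with hyl | hyl
        · have : softThresh η y = 0 := by
            rw [softThresh, if_neg (by push_neg; linarith), if_pos hyl]
          rw [this]; simp; positivity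
        · -- η/2 < y < 5η/8
          have hyu : y < 5 * η / 8 := by
            have := abs_lt.1 hy1; linarith [this.1, this.2]
          have hψy : softThresh η y = (1 + Real.exp ((1 - 2 * (2 * y / η - 1)) /
              ((2 * y / η - 1) * (2 - 2 * y / η))))⁻¹ := by
            rw [softThresh, if_neg (by push_neg; linarith), if_neg (by push_neg; linarith)]
          have hs0 : 0 < 2 * y / η - 1 := by
            rw [sub_pos, lt_div_iff₀ hη]; linarith
          have hs14 : 2 * y / η - 1 < 1 / 4 := by
            rw [sub_lt_iff_lt_add, div_lt_iff₀ hη]; linarith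
          have hs1 : 2 * y / η - 1 < 1 := by linarith
          have h2s : 2 - 2 * y / η = 1 - (2 * y / η - 1) := by ring
          set s := 2 * y / η - 1 with hsdef
          clear_value s
          have hden : 0 < s * (1 - s) := mul_pos hs0 (by linarith)
          have hA_ge : 1 / (2 * s) ≤ (1 - 2 * s) / (s * (1 - s)) := by
            rw [div_le_div_iff₀ (by linarith) hden]
            nlinarith [mul_pos hs0 (show (0:ℝ) < 1 - 3 * s by linarith)]
          set w := 4 * s with hwdef
          clear_value w
          have hwpos : 0 < w := by rw [hwdef]; linarith
          have hexpw : Real.exp (-(1 / w)) ≤ w := by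
            have h2 : 0 < (1:ℝ) / w := by positivity
            have h1 : 1 / w ≤ Real.exp (1 / w) := by
              linarith [Real.add_one_le_exp (1 / w)]
            calc Real.exp (-(1 / w)) = (Real.exp (1 / w))⁻¹ := Real.exp_neg _
              _ ≤ (1 / w)⁻¹ := inv_anti₀ h2 h1
              _ = w := by rw [one_div, inv_inv]
          have hAexp : Real.exp (-((1 - 2 * s) / (s * (1 - s)))) ≤ w ^ 2 := by
            have h1 : Real.exp (-((1 - 2 * s) / (s * (1 - s)))) ≤ Real.exp (-(1 / (2 * s))) :=
              Real.exp_le_exp.2 (neg_le_neg hA_ge)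
            have h2 : (-(1 / (2 * s))) = -(1 / w) + -(1 / w) := by
              rw [hwdef]; field_simp; ring
            rw [h2, Real.exp_add] at h1
            calc Real.exp (-((1 - 2 * s) / (s * (1 - s)))) ≤ _ := h1
              _ ≤ w * w := mul_le_mul hexpw hexpw (Real.exp_pos _).le hwpos.le
              _ = w ^ 2 := (sq w).symm
          have hψ_le : softThresh η y ≤ w ^ 2 := by
            rw [hψy, h2s]
            have hE := Real.exp_pos ((1 - 2 * s) / (s * (1 - s)))
            have hinv : (1 + Real.exp ((1 - 2 * s) / (s * (1 - s))))⁻¹ ≤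
                (Real.exp ((1 - 2 * s) / (s * (1 - s))))⁻¹ :=
              inv_anti₀ hE (by linarith)
            rw [← Real.exp_neg] at hinv
            exact le_trans hinv hAexp
          have habs : |y - η / 2| = y - η / 2 := abs_of_pos (by linarith)
          have hw2 : w ^ 2 ≤ c * |y - η / 2| := by
            have hwval : w = 8 * (y - η / 2) / η := by
              rw [hwdef, hsdef]; field_simp; ring
            rw [habs, hwval, div_pow, div_le_iff₀ (by positivity)]
            have hyd : y - η / 2 < c * η ^ 2 / 64 := by rw [← habs]; exact hy2
            have hηy : 0 < y - η / 2 := by linarith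
            nlinarith [mul_le_mul_of_nonneg_left hyd.le hηy.le, sq_nonneg η]
          have h0 : 0 ≤ softThresh η y := softThresh_nonneg η y
          rw [abs_of_nonneg h0]
          exact le_trans hψ_le hw2
      · -- η/2 < u < η : smooth interior piece
        have hs0 : 0 < 2 * u / η - 1 := by rw [sub_pos, lt_div_iff₀ hη]; linarith
        have hs1 : 0 < 2 - 2 * u / η := by
          rw [sub_pos, div_lt_iff₀ hη]; linarith
        have hden : 0 < (2 * u / η - 1) * (2 - 2 * u / η) := mul_pos hs0 hs1
        have hid : HasDerivAt (fun y : ℝ => 2 * y / η - 1) (2 * 1 / η) u :=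
          (((hasDerivAt_id u).const_mul 2).div_const η).sub_const 1
        have hid2 : HasDerivAt (fun y : ℝ => 2 - 2 * y / η) (-(2 * 1 / η)) u :=
          (((hasDerivAt_id u).const_mul 2).div_const η).const_sub 2
        have hnum : HasDerivAt (fun y : ℝ => 1 - 2 * (2 * y / η - 1)) (-(2 * (2 * 1 / η))) u :=
          (hid.const_mul 2).const_sub 1
        have hd : HasDerivAt (fun y : ℝ => (2 * y / η - 1) * (2 - 2 * y / η))
            (2 * 1 / η * (2 - 2 * u / η) + (2 * u / η - 1) * -(2 * 1 / η)) u := hid.mul hid2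
        have hA : HasDerivAt (fun y : ℝ => (1 - 2 * (2 * y / η - 1)) /
            ((2 * y / η - 1) * (2 - 2 * y / η)))
            ((-(2 * (2 * 1 / η)) * ((2 * u / η - 1) * (2 - 2 * u / η)) -
              (1 - 2 * (2 * u / η - 1)) *
                (2 * 1 / η * (2 - 2 * u / η) + (2 * u / η - 1) * -(2 * 1 / η))) /
              ((2 * u / η - 1) * (2 - 2 * u / η)) ^ 2) u := hnum.div hd (ne_of_gt hden)
        have hqle : (-(2 * (2 * 1 / η)) * ((2 * u / η - 1) * (2 - 2 * u / η)) -
              (1 - 2 * (2 * u / η - 1)) *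
                (2 * 1 / η * (2 - 2 * u / η) + (2 * u / η - 1) * -(2 * 1 / η))) /
              ((2 * u / η - 1) * (2 - 2 * u / η)) ^ 2 ≤ 0 := by
          apply div_nonpos_of_nonpos_of_nonneg _ (by positivity)
          have e1 : 0 ≤ 2 / η * ((2 * u / η - 1) * (2 - 2 * u / η)) :=
            mul_nonneg (by positivity) hden.le
          have e2 : 0 ≤ 2 / η * (1 - 2 * (2 * u / η - 1)) ^ 2 :=
            mul_nonneg (by positivity) (sq_nonneg _)
          nlinarith [e1, e2]
        have hinv : HasDerivAt (fun y : ℝ => (1 + Real.exp ((1 - 2 * (2 * y / η - 1)) /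
            ((2 * y / η - 1) * (2 - 2 * y / η))))⁻¹)
            (-(Real.exp ((1 - 2 * (2 * u / η - 1)) / ((2 * u / η - 1) * (2 - 2 * u / η))) *
              ((-(2 * (2 * 1 / η)) * ((2 * u / η - 1) * (2 - 2 * u / η)) -
              (1 - 2 * (2 * u / η - 1)) *
                (2 * 1 / η * (2 - 2 * u / η) + (2 * u / η - 1) * -(2 * 1 / η))) /
              ((2 * u / η - 1) * (2 - 2 * u / η)) ^ 2)) /
              (1 + Real.exp ((1 - 2 * (2 * u / η - 1)) /
                ((2 * u / η - 1) * (2 - 2 * u / η)))) ^ 2) u :=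
          (hA.exp.const_add 1).inv (by positivity)
        refine ⟨_, ?_, hinv.congr_of_eventuallyEq ?_⟩
        · apply div_nonneg _ (by positivity)
          rw [neg_nonneg]
          exact mul_nonpos_of_nonneg_of_nonpos (Real.exp_pos _).le hqle
        · filter_upwards [Ioo_mem_nhds hu2 hu1] with y hy
          rw [softThresh, if_neg (not_le.2 hy.2), if_neg (not_le.2 hy.1)]
  · rcases eq_or_lt_of_le hu1 with heq | hu1
    · -- u = η : squeeze, derivative 0
      subst heq
      have hη : 0 < η := hu
      refine ⟨0, le_rfl, ?_⟩
      rw [hasDerivAt_iff_isLittleO, Asymptotics.isLittleO_iff]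
      intro c hc
      have hδ : 0 < min (η / 8) (c * η ^ 2 / 64) := lt_min (by positivity) (by positivity)
      have hψη : softThresh η η = 1 := by rw [softThresh, if_pos le_rfl]
      filter_upwards [Metric.ball_mem_nhds η hδ] with y hy
      rw [Metric.mem_ball, Real.dist_eq] at hy
      have hy1 : |y - η| < η / 8 := lt_of_lt_of_le hy (min_le_left _ _)
      have hy2 : |y - η| < c * η ^ 2 / 64 := lt_of_lt_of_le hy (min_le_right _ _)
      rw [smul_zero, sub_zero, hψη, Real.norm_eq_abs, Real.norm_eq_abs]
      rcases le_or_gt η y with hyl | hyl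
      · have : softThresh η y = 1 := by rw [softThresh, if_pos hyl]
        rw [this]; simp; positivity
      · have hylb : 7 * η / 8 < y := by
          have := abs_lt.1 hy1; linarith [this.1]
        have hψy : softThresh η y = (1 + Real.exp ((1 - 2 * (2 * y / η - 1)) /
            ((2 * y / η - 1) * (2 - 2 * y / η))))⁻¹ := by
          rw [softThresh, if_neg (not_le.2 hyl), if_neg (by push_neg; linarith)]
        have hs34 : 3 / 4 ≤ 2 * y / η - 1 := by
          rw [le_sub_iff_add_le, le_div_iff₀ hη]; linarith
        have hs1 : 2 * y / η - 1 < 1 := by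
          rw [sub_lt_iff_lt_add, div_lt_iff₀ hη]; linarith
        have h2s : 2 - 2 * y / η = 1 - (2 * y / η - 1) := by ring
        set s := 2 * y / η - 1 with hsdef
        clear_value s
        have hden : 0 < s * (1 - s) := mul_pos (by linarith) (by linarith)
        have hA_le : (1 - 2 * s) / (s * (1 - s)) ≤ -1 / (2 * (1 - s)) := by
          rw [div_le_div_iff₀ hden (by linarith)]
          nlinarith [mul_nonneg (show (0:ℝ) ≤ 1 - s by linarith)
            (show (0:ℝ) ≤ 3 * s - 2 by linarith)]
        set w := 4 * (1 - s) with hwdef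
        clear_value w
        have hwpos : 0 < w := by rw [hwdef]; linarith
        have hexpw : Real.exp (-(1 / w)) ≤ w := by
          have h2 : 0 < (1:ℝ) / w := by positivity
          have h1 : 1 / w ≤ Real.exp (1 / w) := by
            linarith [Real.add_one_le_exp (1 / w)]
          calc Real.exp (-(1 / w)) = (Real.exp (1 / w))⁻¹ := Real.exp_neg _
            _ ≤ (1 / w)⁻¹ := inv_anti₀ h2 h1
            _ = w := by rw [one_div, inv_inv]
        have hAexp : Real.exp ((1 - 2 * s) / (s * (1 - s))) ≤ w ^ 2 := by
          have h1 : Real.exp ((1 - 2 * s) / (s * (1 - s))) ≤ Real.exp (-1 / (2 * (1 - s))) :=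
            Real.exp_le_exp.2 hA_le
          have h2 : (-1 / (2 * (1 - s))) = -(1 / w) + -(1 / w) := by
            rw [hwdef]
            have hne : (1:ℝ) - s ≠ 0 := by linarith
            field_simp
            ring
          rw [h2, Real.exp_add] at h1
          calc Real.exp ((1 - 2 * s) / (s * (1 - s))) ≤ _ := h1
            _ ≤ w * w := mul_le_mul hexpw hexpw (Real.exp_pos _).le hwpos.le
            _ = w ^ 2 := (sq w).symm
        have hψ_le : 1 - softThresh η y ≤ w ^ 2 := by
          rw [hψy, h2s]
          have hE := Real.exp_pos ((1 - 2 * s) / (s * (1 - s)))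
          have hfs : 1 - (1 + Real.exp ((1 - 2 * s) / (s * (1 - s))))⁻¹ =
              Real.exp ((1 - 2 * s) / (s * (1 - s))) /
                (1 + Real.exp ((1 - 2 * s) / (s * (1 - s)))) := by
            field_simp
            ring
          rw [hfs]
          calc Real.exp ((1 - 2 * s) / (s * (1 - s))) /
                (1 + Real.exp ((1 - 2 * s) / (s * (1 - s))))
              ≤ Real.exp ((1 - 2 * s) / (s * (1 - s))) := div_le_self hE.le (by linarith)
            _ ≤ w ^ 2 := hAexp
        have habs : |y - η| = η - y := by
          rw [abs_of_neg (by linarith)]; ring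
        have hw2 : w ^ 2 ≤ c * |y - η| := by
          have hwval : w = 8 * (η - y) / η := by
            rw [hwdef, hsdef]; field_simp; ring
          rw [habs, hwval, div_pow, div_le_iff₀ (by positivity)]
          have hyd : η - y < c * η ^ 2 / 64 := by rw [← habs]; exact hy2
          have hηy : 0 < η - y := by linarith
          nlinarith [mul_le_mul_of_nonneg_left hyd.le hηy.le, sq_nonneg η]
        have h1' : softThresh η y ≤ 1 := softThresh_le_one η y
        rw [abs_of_nonpos (by linarith), neg_sub]
        exact le_trans hψ_le hw2
    · -- η < u : locally one
      refine ⟨0, le_rfl, ?_⟩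
      have hev : softThresh η =ᶠ[nhds u] fun _ => (1:ℝ) := by
        filter_upwards [Ioi_mem_nhds hu1] with y hy
        rw [softThresh, if_pos (le_of_lt hy)]
      exact (hasDerivAt_const u (1:ℝ)).congr_of_eventuallyEq hev

set_option maxHeartbeats 1000000 in
lemma scoreEst_master {d n : ℕ} (t : ℝ) (ht : 0 < t) (X : Fin n → Vec d) (x : Vec d) :
    ∃ L : Vec d →L[ℝ] Vec d, HasFDerivAt (scoreEst t X) L x ∧
      ∀ v : Vec d, 0 ≤ ⟪v, L v⟫_ℝ + t⁻¹ * ‖v‖ ^ 2 := by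
  rcases Nat.eq_zero_or_pos n with hn | hn
  · subst hn
    have hs : scoreEst t X = fun _ : Vec d => (0 : Vec d) := by
      funext y
      have hkde : kde t X = fun _ : Vec d => (0:ℝ) := by
        funext z; simp [kde]
      simp [scoreEst, hkde, gradient_const]
    rw [hs]
    refine ⟨0, hasFDerivAt_const 0 x, fun v => ?_⟩
    simp only [ContinuousLinearMap.zero_apply, inner_zero_right, zero_add]
    positivity
  · have hnR : (0:ℝ) < n := by exact_mod_cast hn
    have hu0 : 0 < kde t X x := by
      apply mul_pos (inv_pos.2 hnR)
      have : Nonempty (Fin n) := ⟨⟨0, hn⟩⟩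
      exact Finset.sum_pos (fun i _ => gaussKernel_pos ht _) Finset.univ_nonempty
    obtain ⟨D, hD, hψd⟩ := psi_hasDerivAt (etaThr d n t) (kde t X x) hu0
    have hq : HasDerivAt (fun z : ℝ => softThresh (etaThr d n t) z / z)
        ((D * kde t X x - softThresh (etaThr d n t) (kde t X x) * 1) / kde t X x ^ 2)
        (kde t X x) := hψd.div (hasDerivAt_id _) (ne_of_gt hu0)
    have hukde := hasFDerivAt_kde t ht X x
    have hc := hq.comp_hasFDerivAt x hukde
    have hG := hasFDerivAt_gHat t ht X x
    have hsc : scoreEst t X = fun y =>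
        ((fun z : ℝ => softThresh (etaThr d n t) z / z) ∘ kde t X) y • gHat t X y := by
      funext y
      simp only [scoreEst, Function.comp_apply]
      rw [gradient_kde t ht X y]
    have hFull := hc.fun_smul hG
    rw [← hsc] at hFull
    refine ⟨_, hFull, fun v => ?_⟩
    have hflip : ∀ w : Vec d, ⟪w, v⟫_ℝ = ⟪v, w⟫_ℝ := fun w => real_inner_comm v w
    have hgv : ⟪gHat t X x, v⟫_ℝ
        = ((n:ℝ) * t)⁻¹ * ∑ i, gaussKernel d t (X i - x) * ⟪v, X i - x⟫_ℝ := by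
      simp only [gHat, real_inner_smul_left, sum_inner]
      congr 1
      exact Finset.sum_congr rfl fun i _ => by rw [hflip]
    have hvg : ⟪v, gHat t X x⟫_ℝ
        = ((n:ℝ) * t)⁻¹ * ∑ i, gaussKernel d t (X i - x) * ⟪v, X i - x⟫_ℝ := by
      rw [real_inner_comm]; exact hgv
    have hGraw : ⟪v, ((∑ i,
          (gaussKernel d t (X i - x) • (-(ContinuousLinearMap.id ℝ (Vec d))) +
            ((gaussKernel d t (X i - x) * t⁻¹) • innerSL ℝ (X i - x)).smulRight (X i - x)))
            v : Vec d)⟫_ℝ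
        = t⁻¹ * (∑ i, gaussKernel d t (X i - x) * ⟪v, X i - x⟫_ℝ ^ 2)
            - (∑ i, gaussKernel d t (X i - x)) * ‖v‖ ^ 2 := by
      simp only [ContinuousLinearMap.sum_apply, ContinuousLinearMap.add_apply,
        ContinuousLinearMap.smul_apply, ContinuousLinearMap.neg_apply,
        ContinuousLinearMap.id_apply, ContinuousLinearMap.smulRight_apply, innerSL_apply_apply,
        smul_eq_mul, inner_sum, inner_add_right, real_inner_smul_right, inner_neg_right,
        real_inner_self_eq_norm_sq, hflip]
      rw [Finset.mul_sum, Finset.sum_mul, ← Finset.sum_sub_distrib]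
      refine Finset.sum_congr rfl fun i _ => ?_
      ring
    simp only [ContinuousLinearMap.add_apply, ContinuousLinearMap.smul_apply,
      ContinuousLinearMap.smulRight_apply, innerSL_apply_apply, Function.comp_apply, smul_eq_mul,
      inner_add_right, real_inner_smul_right]
    rw [hGraw, hgv, hvg]
    have hk : ∀ i : Fin n, 0 ≤ gaussKernel d t (X i - x) := fun i => (gaussKernel_pos ht _).le
    have hP : 0 < ∑ i, gaussKernel d t (X i - x) := by
      have : Nonempty (Fin n) := ⟨⟨0, hn⟩⟩
      exact Finset.sum_pos (fun i _ => gaussKernel_pos ht _) Finset.univ_nonempty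
    have hS : 0 ≤ ∑ i, gaussKernel d t (X i - x) * ⟪v, X i - x⟫_ℝ ^ 2 :=
      Finset.sum_nonneg fun i _ => mul_nonneg (hk i) (sq_nonneg _)
    have hCS : (∑ i, gaussKernel d t (X i - x) * ⟪v, X i - x⟫_ℝ) *
          (∑ i, gaussKernel d t (X i - x) * ⟪v, X i - x⟫_ℝ)
        ≤ (∑ i, gaussKernel d t (X i - x)) *
          ∑ i, gaussKernel d t (X i - x) * ⟪v, X i - x⟫_ℝ ^ 2 := by
      have h := cs_sum (fun i => gaussKernel d t (X i - x)) (fun i => ⟪v, X i - x⟫_ℝ) hk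
      rw [pow_two] at h
      exact h
    exact key_ineq (n:ℝ) t (kde t X x) _ _ _ _ _ D hnR ht rfl hP hS (by positivity) hCS
      (softThresh_nonneg _ _) (softThresh_le_one _ _) hD

end StatementThreeAux


/-- Jacobian lower bound for the soft-thresholded score estimator.
For every `x`, `t > 0` and every realization of the data,
`J_{ŝ_t}(x) + (1/t) I_d ⪰ 0`; consequently, for the induced forward-process estimator
`ŝ_{X_k}` (with `0 < ᾱ_k < 1` and `τ ≥ 0`), `J_{ŝ_{X_k}}(x) + (1−ᾱ_k)⁻¹ I_d ⪰ 0`. -/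
theorem statement_3 (d n : ℕ) (t : ℝ) (ht : 0 < t) (X : Fin n → Vec d) (x : Vec d) :
    (∀ v : Vec d, 0 ≤ ⟪v, fderiv ℝ (scoreEst t X) x v⟫_ℝ + t⁻¹ * ‖v‖ ^ 2) ∧
    ∀ τ a : ℝ, 0 ≤ τ → 0 < a → a < 1 →
      ∀ v : Vec d, 0 ≤ ⟪v, fderiv ℝ (scoreEstX τ a X) x v⟫_ℝ + (1 - a)⁻¹ * ‖v‖ ^ 2 := by
  obtain ⟨L, hL, hbd⟩ := scoreEst_master t ht X x
  constructor
  · intro v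
    rw [hL.fderiv]
    exact hbd v
  · intro τ a hτ ha0 ha1 v
    have hta : 0 < (1 - a) / a + τ :=
      add_pos_of_pos_of_nonneg (div_pos (by linarith) ha0) hτ
    obtain ⟨L', hL', hbd'⟩ :=
      scoreEst_master ((1 - a) / a + τ) hta X ((Real.sqrt a)⁻¹ • x)
    have hsa : 0 < Real.sqrt a := Real.sqrt_pos.2 ha0
    have hm : HasFDerivAt (fun y : Vec d => (Real.sqrt a)⁻¹ • y)
        ((Real.sqrt a)⁻¹ • ContinuousLinearMap.id ℝ (Vec d)) x :=
      (hasFDerivAt_id x).const_smul ((Real.sqrt a)⁻¹)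
    have hcomp := hL'.comp x hm
    have hX : HasFDerivAt (scoreEstX τ a X)
        ((Real.sqrt a)⁻¹ •
          (L'.comp ((Real.sqrt a)⁻¹ • ContinuousLinearMap.id ℝ (Vec d)))) x :=
      hcomp.const_smul ((Real.sqrt a)⁻¹)
    rw [hX.fderiv]
    have hinner : ⟪v, ((Real.sqrt a)⁻¹ •
        (L'.comp ((Real.sqrt a)⁻¹ • ContinuousLinearMap.id ℝ (Vec d)))) v⟫_ℝ
        = (Real.sqrt a)⁻¹ * ((Real.sqrt a)⁻¹ * ⟪v, L' v⟫_ℝ) := by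
      simp only [ContinuousLinearMap.smul_apply, ContinuousLinearMap.coe_comp',
        Function.comp_apply, ContinuousLinearMap.id_apply, _root_.map_smul,
        real_inner_smul_right, smul_eq_mul]
    rw [hinner]
    have hss : (Real.sqrt a)⁻¹ * (Real.sqrt a)⁻¹ = a⁻¹ := by
      rw [← mul_inv, Real.mul_self_sqrt ha0.le]
    have h2 := hbd' v
    have hN : (0:ℝ) ≤ ‖v‖ ^ 2 := by positivity
    have he : a⁻¹ * ((1 - a) / a + τ)⁻¹ = ((1 - a) + a * τ)⁻¹ := by
      rw [← mul_inv]
      congr 1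
      field_simp
    have hmono : ((1 - a) + a * τ)⁻¹ ≤ (1 - a)⁻¹ := by
      apply inv_anti₀ (by linarith)
      nlinarith
    have h4 : 0 ≤ a⁻¹ * (⟪v, L' v⟫_ℝ + ((1 - a) / a + τ)⁻¹ * ‖v‖ ^ 2) :=
      mul_nonneg (inv_nonneg.2 ha0.le) h2
    have h5 : a⁻¹ * (((1 - a) / a + τ)⁻¹ * ‖v‖ ^ 2) ≤ (1 - a)⁻¹ * ‖v‖ ^ 2 := by
      rw [← mul_assoc, he]
      exact mul_le_mul_of_nonneg_right hmono hN
    have h6 : (Real.sqrt a)⁻¹ * ((Real.sqrt a)⁻¹ * ⟪v, L' v⟫_ℝ) = a⁻¹ * ⟪v, L' v⟫_ℝ := by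
      rw [← mul_assoc, hss]
    rw [h6]
    nlinarith [h4, h5]

end
end

section
/- For all sufficiently large K (depending only on c₀, c₁), the learning rates defined by the schedule satisfy, for every k with 2 ≤ k ≤ K: (a) 1 − α_k < (1 − α_k)/(1 − ᾱ_k) ≤ c₁ log K / K; (b) 1 < (1 − ᾱ_k)/(1 − ᾱ_{k−1}) ≤ 1 + c₁ log K / K; (c) c₁ log K / K < (1 − α_k)/(α_k − ᾱ_k) ≤ 2c₁ log K / K; and moreover (d) ᾱ_K ≤ K^{−c₁/4}. -/
open MeasureTheory ProbabilityTheory Real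
open scoped InnerProductSpace ENNReal NNReal BigOperators

noncomputable section

/-! ### Auxiliary lemmas for Statement 8 -/

private lemma abar_step (K : ℕ) (c0 c1 : ℝ) (m : ℕ) :
    abar K c0 c1 (m + 2) = abar K c0 c1 (m + 1) -
      c1 * Real.log K / K * (abar K c0 c1 (m + 1) * (1 - abar K c0 c1 (m + 1))) := rfl

private lemma abar_one (K : ℕ) (c0 c1 : ℝ) :
    abar K c0 c1 1 = 1 - (K : ℝ) ^ (-c0) := rfl

private lemma abar_bounds (K : ℕ) (c0 c1 : ℝ)
    (hd0 : 0 < c1 * Real.log K / K) (hd1 : c1 * Real.log K / K ≤ 1 / 20)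
    (h10 : 0 < abar K c0 c1 1) (h11 : abar K c0 c1 1 < 1) :
    ∀ k, 1 ≤ k → 0 < abar K c0 c1 k ∧ abar K c0 c1 k < 1 := by
  intro k hk
  induction k, hk using Nat.le_induction with
  | base => exact ⟨h10, h11⟩
  | succ n hn ih =>
    obtain ⟨m, rfl⟩ := Nat.exists_eq_add_of_le' hn
    rw [abar_step]
    set d := c1 * Real.log K / K with hd
    set a := abar K c0 c1 (m + 1) with ha
    obtain ⟨ha0, ha1⟩ := ih
    constructor
    · nlinarith [mul_pos ha0 (sub_pos.2 ha1)]
    · nlinarith [mul_pos hd0 (mul_pos ha0 (sub_pos.2 ha1))]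

private lemma ratio_bound (K : ℕ) (c0 c1 : ℝ)
    (hd0 : 0 < c1 * Real.log K / K) (hd1 : c1 * Real.log K / K ≤ 1 / 20)
    (h10 : 0 < abar K c0 c1 1) (h11 : abar K c0 c1 1 < 1) :
    ∀ k, 1 ≤ k → abar K c0 c1 k / (1 - abar K c0 c1 k) ≤
      abar K c0 c1 1 / (1 - abar K c0 c1 1) *
        Real.exp (-((k : ℝ) - 1) * (c1 * Real.log K / K / (1 + c1 * Real.log K / K))) := by
  intro k hk
  induction k, hk using Nat.le_induction with
  | base => simp
  | succ n hn ih =>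
    obtain ⟨m, rfl⟩ := Nat.exists_eq_add_of_le' hn
    set d := c1 * Real.log K / K with hd
    set a := abar K c0 c1 (m + 1) with ha
    obtain ⟨ha0, ha1⟩ := abar_bounds K c0 c1 hd0 hd1 h10 h11 (m + 1) le_add_self
    obtain ⟨hb0, hb1⟩ := abar_bounds K c0 c1 hd0 hd1 h10 h11 (m + 2) (by omega)
    have h1a : (0:ℝ) < 1 - a := by linarith
    have h1b : (0:ℝ) < 1 - abar K c0 c1 (m + 2) := by linarith
    have h1d : (0:ℝ) < 1 + d := by linarith
    have hstep : abar K c0 c1 (m + 2) / (1 - abar K c0 c1 (m + 2)) ≤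
        a / (1 - a) * (1 / (1 + d)) := by
      rw [div_mul_div_comm, div_le_div_iff₀ h1b (by positivity)]
      rw [abar_step]
      nlinarith [mul_nonneg (sq_nonneg (d * (1 - a))) ha0.le]
    have hexp : 1 / (1 + d) ≤ Real.exp (-(d / (1 + d))) := by
      have h := Real.add_one_le_exp (-(d / (1 + d)))
      have : 1 / (1 + d) = -(d / (1 + d)) + 1 := by field_simp; ring
      linarith
    have hR0 : 0 ≤ abar K c0 c1 1 / (1 - abar K c0 c1 1) :=
      div_nonneg h10.le (by linarith)
    calc abar K c0 c1 (m + 2) / (1 - abar K c0 c1 (m + 2))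
        ≤ a / (1 - a) * (1 / (1 + d)) := hstep
      _ ≤ (abar K c0 c1 1 / (1 - abar K c0 c1 1) *
            Real.exp (-((m + 1 : ℕ) - 1 : ℝ) * (d / (1 + d)))) *
            Real.exp (-(d / (1 + d))) := by
          apply mul_le_mul ih hexp (div_nonneg zero_le_one h1d.le) (mul_nonneg hR0 (Real.exp_pos _).le)
      _ = abar K c0 c1 1 / (1 - abar K c0 c1 1) *
            Real.exp (-((m + 2 : ℕ) - 1 : ℝ) * (d / (1 + d))) := by
          rw [mul_assoc, ← Real.exp_add]
          congr 2
          push_cast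
          ring

set_option maxHeartbeats 2000000 in
/-- Lemma 1: properties of the learning-rate schedule.
For all sufficiently large `K` (depending only on `c₀, c₁`), for every `2 ≤ k ≤ K`:
(a) `1 − α_k < (1−α_k)/(1−ᾱ_k) ≤ c₁ log K / K`;
(b) `1 < (1−ᾱ_k)/(1−ᾱ_{k−1}) ≤ 1 + c₁ log K / K`;
(c) `c₁ log K / K < (1−α_k)/(α_k − ᾱ_k) ≤ 2 c₁ log K / K`;
and (d) `ᾱ_K ≤ K^{−c₁/4}`. -/
theorem statement_8 (c0 c1 : ℝ) (hc0 : 0 < c0) (hc1 : 5 * c0 ≤ c1) :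
    ∃ K0 : ℕ, ∀ K : ℕ, K0 ≤ K →
      (∀ k : ℕ, 2 ≤ k → k ≤ K →
        (1 - alphak K c0 c1 k < (1 - alphak K c0 c1 k) / (1 - abar K c0 c1 k) ∧
          (1 - alphak K c0 c1 k) / (1 - abar K c0 c1 k) ≤ c1 * Real.log K / K) ∧
        (1 < (1 - abar K c0 c1 k) / (1 - abar K c0 c1 (k - 1)) ∧
          (1 - abar K c0 c1 k) / (1 - abar K c0 c1 (k - 1)) ≤ 1 + c1 * Real.log K / K) ∧
        (c1 * Real.log K / K < (1 - alphak K c0 c1 k) / (alphak K c0 c1 k - abar K c0 c1 k) ∧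
          (1 - alphak K c0 c1 k) / (alphak K c0 c1 k - abar K c0 c1 k) ≤
            2 * c1 * Real.log K / K)) ∧
      abar K c0 c1 K ≤ (K : ℝ) ^ (-(c1 / 4)) := by
  have hc1pos : 0 < c1 := by linarith
  have htend : Filter.Tendsto (fun x : ℝ => c1 * Real.log x / x) Filter.atTop (nhds 0) := by
    have h := Real.tendsto_pow_log_div_mul_add_atTop 1 0 1 one_ne_zero
    simp only [pow_one, one_mul, add_zero] at h
    have h2 := h.const_mul c1
    simp only [mul_zero] at h2
    exact h2.congr (fun x => by ring)
  have hev : ∀ᶠ x : ℝ in Filter.atTop, c1 * Real.log x / x ≤ 1 / 20 :=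
    htend.eventually (eventually_le_nhds (by norm_num : (0:ℝ) < 1 / 20))
  have hevN : ∀ᶠ K : ℕ in Filter.atTop, c1 * Real.log K / K ≤ 1 / 20 :=
    tendsto_natCast_atTop_atTop.eventually hev
  obtain ⟨K0, hK0⟩ := Filter.eventually_atTop.mp (hevN.and (Filter.eventually_ge_atTop 2))
  refine ⟨K0, fun K hK => ?_⟩
  obtain ⟨hd1, hK2⟩ := hK0 K hK
  have hKR : (2:ℝ) ≤ K := by exact_mod_cast hK2
  have hKpos : (0:ℝ) < K := by linarith
  have hK1 : (1:ℝ) < K := by linarith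
  have hL : 0 < Real.log K := Real.log_pos hK1
  have hd0 : 0 < c1 * Real.log K / K := by positivity
  have ht0 : 0 < (K:ℝ) ^ (-c0) := Real.rpow_pos_of_pos hKpos _
  have ht1 : (K:ℝ) ^ (-c0) < 1 := Real.rpow_lt_one_of_one_lt_of_neg hK1 (by linarith)
  have h10 : 0 < abar K c0 c1 1 := by rw [abar_one]; linarith
  have h11 : abar K c0 c1 1 < 1 := by rw [abar_one]; linarith
  constructor
  · intro k hk2 hkK
    obtain ⟨m, rfl⟩ := Nat.exists_eq_add_of_le' hk2
    have e1 : m + 2 - 1 = m + 1 := rfl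
    rw [e1]
    set d := c1 * Real.log K / K with hd
    obtain ⟨ha0, ha1⟩ := abar_bounds K c0 c1 hd0 hd1 h10 h11 (m + 1) le_add_self
    obtain ⟨hb0, hb1⟩ := abar_bounds K c0 c1 hd0 hd1 h10 h11 (m + 2) (by omega)
    set a := abar K c0 c1 (m + 1) with ha
    have h1a : (0:ℝ) < 1 - a := by linarith
    have hane : a ≠ 0 := ne_of_gt ha0
    have hbe : abar K c0 c1 (m + 2) = a - d * (a * (1 - a)) := abar_step K c0 c1 m
    have hα : alphak K c0 c1 (m + 2) = 1 - d * (1 - a) := by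
      show abar K c0 c1 (m + 2) / a = 1 - d * (1 - a)
      rw [hbe, div_eq_iff hane]; ring
    rw [hbe] at hb0 hb1
    rw [hα, hbe]
    have hsmall : d * (1 - a) ≤ 1 / 20 := by nlinarith [mul_nonneg hd0.le ha0.le]
    have h1b : (0:ℝ) < 1 - (a - d * (a * (1 - a))) := by linarith
    have hden : (0:ℝ) < (1 - d * (1 - a)) - (a - d * (a * (1 - a))) := by
      nlinarith [mul_pos h1a (show (0:ℝ) < 1 - d * (1 - a) by linarith)]
    refine ⟨⟨?_, ?_⟩, ⟨?_, ?_⟩, ?_, ?_⟩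
    · rw [lt_div_iff₀ h1b]
      nlinarith [mul_pos (mul_pos hd0 h1a) hb0]
    · rw [div_le_iff₀ h1b]
      nlinarith [mul_nonneg (mul_nonneg (mul_pos hd0 hd0).le ha0.le) h1a.le]
    · rw [lt_div_iff₀ h1a]
      nlinarith [mul_pos (mul_pos hd0 ha0) h1a]
    · rw [div_le_iff₀ h1a]
      nlinarith [mul_nonneg hd0.le (sq_nonneg (1 - a))]
    · rw [lt_div_iff₀ hden]
      nlinarith [mul_pos (mul_pos hd0 h1a) (mul_pos hd0 h1a)]
    · rw [show (2:ℝ) * c1 * Real.log K / K = 2 * d by rw [hd]; ring, div_le_iff₀ hden]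
      nlinarith [mul_nonneg (mul_pos hd0 h1a).le
        (show (0:ℝ) ≤ 1 - 2 * (d * (1 - a)) by linarith)]
  · have hrb := ratio_bound K c0 c1 hd0 hd1 h10 h11 K (by omega)
    obtain ⟨hK0', hK1'⟩ := abar_bounds K c0 c1 hd0 hd1 h10 h11 K (by omega)
    have h1bK : 0 < 1 - abar K c0 c1 K := by linarith
    set d := c1 * Real.log K / K with hd
    have h1d : (0:ℝ) < 1 + d := by linarith
    have e1 : abar K c0 c1 K ≤ abar K c0 c1 K / (1 - abar K c0 c1 K) := by
      rw [le_div_iff₀ h1bK]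
      nlinarith
    have hR1 : abar K c0 c1 1 / (1 - abar K c0 c1 1) ≤ (K:ℝ) ^ c0 := by
      rw [abar_one, show (1:ℝ) - (1 - (K:ℝ) ^ (-c0)) = (K:ℝ) ^ (-c0) by ring,
        div_le_iff₀ ht0, ← Real.rpow_add hKpos, add_neg_cancel, Real.rpow_zero]
      linarith
    have e2 : abar K c0 c1 K ≤ (K:ℝ) ^ c0 * Real.exp (-((K:ℝ) - 1) * (d / (1 + d))) := by
      refine le_trans (le_trans e1 hrb) ?_
      exact mul_le_mul_of_nonneg_right hR1 (Real.exp_pos _).le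
    refine le_trans e2 ?_
    rw [Real.rpow_def_of_pos hKpos, Real.rpow_def_of_pos hKpos, ← Real.exp_add,
      Real.exp_le_exp]
    have heps : 20 / 21 * d ≤ d / (1 + d) := by
      rw [le_div_iff₀ h1d]; nlinarith
    have hdK : d * K = c1 * Real.log K := by
      rw [hd]; field_simp
    nlinarith [mul_le_mul_of_nonneg_left heps (show (0:ℝ) ≤ (K:ℝ) - 1 by linarith),
      mul_le_mul_of_nonneg_right hKR hd0.le,
      mul_le_mul_of_nonneg_left (show c0 ≤ c1 / 5 by linarith) hL.le,
      mul_pos hc1pos hL]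
end
end

section
/- For every x ∈ R^d and t > 0, the gradient of the Gaussian kernel density estimator, ĝ_t(x) := ∇p̂_t(x) = (1/(nt)) Σᵢ (X⁽ⁱ⁾ − x) φ_t(X⁽ⁱ⁾ − x), satisfies E[‖ĝ_t(x) − g_t(x)‖₂²] ≤ p_t(x)/(n(2πt)^{d/2}·t), where g_t(x) := E[ĝ_t(x)] = (1/t)·E[(Z₀ − x) φ_t(Z₀ − x)]. -/
open MeasureTheory ProbabilityTheory Real
open scoped InnerProductSpace ENNReal NNReal BigOperators

noncomputable section

lemma twos_le_exp (s : ℝ) (hs : 0 ≤ s) : 2 * s ≤ Real.exp s := by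
  have h1 := Real.add_one_le_exp (s/2)
  have h2 : Real.exp (s/2) * Real.exp (s/2) = Real.exp s := by
    rw [← Real.exp_add]; ring_nf
  have h3 := mul_le_mul h1 h1 (by linarith) (Real.exp_pos (s/2)).le
  nlinarith [sq_nonneg (s/2 - 1)]

lemma gaussKernel_nonneg (d : ℕ) {t : ℝ} (ht : 0 < t) (z : Vec d) : 0 ≤ gaussKernel d t z := by
  unfold gaussKernel
  have : (0:ℝ) < 2 * π * t := by positivity
  positivity

lemma gaussKernel_le (d : ℕ) {t : ℝ} (ht : 0 < t) (z : Vec d) :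
    gaussKernel d t z ≤ (2 * π * t) ^ (-(d : ℝ) / 2) := by
  unfold gaussKernel
  have h1 : Real.exp (-‖z‖ ^ 2 / (2 * t)) ≤ 1 := by
    rw [Real.exp_le_one_iff]
    have : (0:ℝ) ≤ ‖z‖^2 / (2*t) := by positivity
    rw [neg_div]; linarith
  have hA : (0:ℝ) < (2 * π * t) ^ (-(d : ℝ) / 2) :=
    Real.rpow_pos_of_pos (by positivity) _
  nlinarith

lemma key_bound (d : ℕ) {t : ℝ} (ht : 0 < t) (z : Vec d) :
    ‖(t⁻¹ * gaussKernel d t z) • z‖ ^ 2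
      ≤ (2 * π * t) ^ (-(d : ℝ) / 2) * t⁻¹ * gaussKernel d t z := by
  set A : ℝ := (2 * π * t) ^ (-(d : ℝ) / 2) with hAdef
  have hA : 0 < A := Real.rpow_pos_of_pos (by positivity) _
  have hφ : gaussKernel d t z = A * Real.exp (-‖z‖ ^ 2 / (2 * t)) := rfl
  have hφ0 : 0 ≤ gaussKernel d t z := gaussKernel_nonneg d ht z
  have hc : 0 ≤ t⁻¹ * gaussKernel d t z := by positivity
  rw [norm_smul, Real.norm_of_nonneg hc, mul_pow]
  -- (t⁻¹ φ)^2 ‖z‖^2 ≤ A t⁻¹ φ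
  have hE : Real.exp (-‖z‖ ^ 2 / (2 * t)) * ‖z‖ ^ 2 ≤ t := by
    set s : ℝ := ‖z‖ ^ 2 / (2 * t) with hs
    have hs0 : 0 ≤ s := by positivity
    have hz : ‖z‖ ^ 2 = 2 * t * s := by rw [hs]; field_simp
    have hexp : Real.exp (-‖z‖ ^ 2 / (2 * t)) = (Real.exp s)⁻¹ := by
      rw [← Real.exp_neg]; congr 1; rw [hz]; field_simp
    rw [hexp, hz]
    have h2s := twos_le_exp s hs0
    have hep := Real.exp_pos s
    rw [inv_mul_le_iff₀ hep]
    nlinarith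
  calc (t⁻¹ * gaussKernel d t z) ^ 2 * ‖z‖ ^ 2
      = (t⁻¹)^2 * (A * gaussKernel d t z) * (Real.exp (-‖z‖ ^ 2 / (2 * t)) * ‖z‖ ^ 2) := by
        rw [hφ]; ring
    _ ≤ (t⁻¹)^2 * (A * gaussKernel d t z) * t := by
        apply mul_le_mul_of_nonneg_left hE; positivity
    _ = A * t⁻¹ * gaussKernel d t z := by
        field_simp

section aux
variable {E : Type*} [MeasurableSpace E] (P : Measure E) [IsProbabilityMeasure P] {n : ℕ}

lemma pi_integral_prod (F : Fin n → E → ℝ) :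
    ∫ X, ∏ i, F i (X i) ∂(Measure.pi fun _ : Fin n => P) = ∏ i, ∫ y, F i y ∂P := by
  letI : MeasureSpace E := ⟨P⟩
  exact MeasureTheory.integral_fintype_prod_eq_prod F

lemma integral_eval (i : Fin n) (h : E → ℝ) :
    ∫ X, h (X i) ∂(Measure.pi fun _ : Fin n => P) = ∫ y, h y ∂P := by
  have key := pi_integral_prod P (fun k => if k = i then h else fun _ => 1)
  have h1' : ∀ X : Fin n → E, (∏ k, (if k = i then h else fun _ => 1) (X k)) = h (X i) := by
    intro X
    rw [Fintype.prod_eq_single i]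
    · rw [if_pos rfl]
    · intro k hk; rw [if_neg hk]
  have h2' : (∏ k, ∫ y, (if k = i then h else fun _ => 1) y ∂P) = ∫ y, h y ∂P := by
    rw [Fintype.prod_eq_single i]
    · rw [if_pos rfl]
    · intro k hk; rw [if_neg hk]; simp
  rw [← h2', ← key]
  exact integral_congr_ae (ae_of_all _ fun X => (h1' X).symm)

lemma integral_eval_mul {i j : Fin n} (hij : i ≠ j) (h1 h2 : E → ℝ) :
    ∫ X, h1 (X i) * h2 (X j) ∂(Measure.pi fun _ : Fin n => P)
      = (∫ y, h1 y ∂P) * (∫ y, h2 y ∂P) := by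
  have key := pi_integral_prod P (fun k => if k = i then h1 else if k = j then h2 else fun _ => 1)
  have h1' : ∀ X : Fin n → E, (∏ k, (if k = i then h1 else if k = j then h2 else fun _ => 1) (X k))
      = h1 (X i) * h2 (X j) := by
    intro X
    rw [Fintype.prod_eq_mul i j hij]
    · rw [if_pos rfl, if_neg (Ne.symm hij), if_pos rfl]
    · intro k ⟨hki, hkj⟩; rw [if_neg hki, if_neg hkj]
  have h2' : (∏ k, ∫ y, (if k = i then h1 else if k = j then h2 else fun _ => 1) y ∂P)
      = (∫ y, h1 y ∂P) * (∫ y, h2 y ∂P) := by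
    rw [Fintype.prod_eq_mul i j hij]
    · rw [if_pos rfl, if_neg (Ne.symm hij), if_pos rfl]
    · intro k ⟨hki, hkj⟩; rw [if_neg hki, if_neg hkj]; simp
  rw [← h2', ← key]
  exact integral_congr_ae (ae_of_all _ fun X => (h1' X).symm)

end aux

lemma norm_sq_eq_sum {d : ℕ} (v : Vec d) : ‖v‖ ^ 2 = ∑ k, (v k) ^ 2 := by
  rw [EuclideanSpace.norm_eq, Real.sq_sqrt (by positivity)]
  simp [sq_abs]

lemma coord_abs_le_norm {d : ℕ} (v : Vec d) (k : Fin d) : |v k| ≤ ‖v‖ := by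
  have h1 : (v k) ^ 2 ≤ ‖v‖ ^ 2 := by
    rw [norm_sq_eq_sum]
    exact Finset.single_le_sum (fun i _ => sq_nonneg (v i)) (Finset.mem_univ k)
  have h2 := Real.sqrt_le_sqrt h1
  rwa [Real.sqrt_sq_eq_abs, Real.sqrt_sq (norm_nonneg v)] at h2

lemma pi_var_sum {d n : ℕ} (P : Measure (Vec d)) [IsProbabilityMeasure P]
    (g : Vec d → Vec d) (hgc : Continuous g) (C : ℝ) (hC : ∀ y, ‖g y‖ ≤ C)
    (hmean : ∫ y, g y ∂P = 0) :
    ∫ X, ‖∑ i, g (X i)‖ ^ 2 ∂(Measure.pi fun _ : Fin n => P)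
      = n * ∫ y, ‖g y‖ ^ 2 ∂P := by
  have hC0 : 0 ≤ C := le_trans (norm_nonneg _) (hC 0)
  have hint : Integrable g P :=
    Integrable.mono' (integrable_const C) hgc.aestronglyMeasurable (ae_of_all _ hC)
  have hgk0 : ∀ k, ∫ y, g y k ∂P = 0 := by
    intro k
    have h := ((EuclideanSpace.proj (𝕜 := ℝ) k).integral_comp_comm hint).symm
    rw [hmean] at h
    simpa using h.symm
  have hbd : ∀ (y : Vec d) (k : Fin d), |g y k| ≤ C :=
    fun y k => le_trans (coord_abs_le_norm _ k) (hC y)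
  have hcont : ∀ (i : Fin n) (k : Fin d),
      Continuous (fun X : Fin n → Vec d => g (X i) k) := by
    intro i k
    exact (continuous_apply k).comp ((PiLp.continuous_ofLp (p := 2) (fun _ : Fin d => ℝ)).comp (hgc.comp (continuous_apply i)))
  have hibase : ∀ (k : Fin d) (i j : Fin n),
      Integrable (fun X : Fin n → Vec d => g (X i) k * g (X j) k)
        (Measure.pi fun _ : Fin n => P) := by
    intro k i j
    refine Integrable.mono' (integrable_const (C * C))
      (((hcont i k).mul (hcont j k)).aestronglyMeasurable) (ae_of_all _ fun X => ?_)
    rw [Real.norm_eq_abs, abs_mul]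
    exact mul_le_mul (hbd _ _) (hbd _ _) (abs_nonneg _) hC0
  have hibP : ∀ k : Fin d, Integrable (fun y => g y k * g y k) P := by
    intro k
    refine Integrable.mono' (integrable_const (C * C))
      (((continuous_apply k).comp ((PiLp.continuous_ofLp (p := 2) (fun _ : Fin d => ℝ)).comp hgc)).mul ((continuous_apply k).comp ((PiLp.continuous_ofLp (p := 2) (fun _ : Fin d => ℝ)).comp hgc))).aestronglyMeasurable
      (ae_of_all _ fun y => ?_)
    rw [Real.norm_eq_abs, abs_mul]
    exact mul_le_mul (hbd _ _) (hbd _ _) (abs_nonneg _) hC0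
  calc ∫ X, ‖∑ i, g (X i)‖ ^ 2 ∂(Measure.pi fun _ : Fin n => P)
      = ∫ X, ∑ k, ∑ i, ∑ j, g (X i) k * g (X j) k ∂(Measure.pi fun _ : Fin n => P) := by
        refine integral_congr_ae (ae_of_all _ fun X => ?_)
        show ‖∑ i, g (X i)‖ ^ 2 = ∑ k, ∑ i, ∑ j, g (X i) k * g (X j) k
        rw [norm_sq_eq_sum]
        refine Finset.sum_congr rfl fun k _ => ?_
        have hap : (∑ i, g (X i)) k = ∑ i, g (X i) k := by
          rw [WithLp.ofLp_sum]; exact Finset.sum_apply k Finset.univ _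
        rw [hap, pow_two, Finset.sum_mul_sum]
    _ = ∑ k, ∑ i, ∑ j, ∫ X, g (X i) k * g (X j) k ∂(Measure.pi fun _ : Fin n => P) := by
        rw [integral_finset_sum _ (fun k _ => integrable_finset_sum _
          (fun i _ => integrable_finset_sum _ (fun j _ => hibase k i j)))]
        refine Finset.sum_congr rfl fun k _ => ?_
        rw [integral_finset_sum _ (fun i _ => integrable_finset_sum _ (fun j _ => hibase k i j))]
        refine Finset.sum_congr rfl fun i _ => ?_
        rw [integral_finset_sum _ (fun j _ => hibase k i j)]
    _ = ∑ k, ∑ _i : Fin n, ∫ y, g y k * g y k ∂P := by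
        refine Finset.sum_congr rfl fun k _ => Finset.sum_congr rfl fun i _ => ?_
        rw [Finset.sum_eq_single i]
        · exact integral_eval P i (fun y => g y k * g y k)
        · intro j _ hji
          rw [integral_eval_mul P (Ne.symm hji) (fun y => g y k) (fun y => g y k), hgk0 k,
            mul_zero]
        · intro h; exact absurd (Finset.mem_univ i) h
    _ = n * ∫ y, ‖g y‖ ^ 2 ∂P := by
        rw [Finset.sum_comm]
        simp only [Finset.sum_const, Finset.card_univ, Fintype.card_fin, nsmul_eq_mul]
        congr 1
        rw [← integral_finset_sum _ (fun k _ => hibP k)]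
        refine integral_congr_ae (ae_of_all _ fun y => ?_)
        show ∑ k, g y k * g y k = ‖g y‖ ^ 2
        rw [norm_sq_eq_sum]
        exact Finset.sum_congr rfl fun k _ => (pow_two (g y k)).symm

/-- Lemma: MSE of the gradient of the kernel density estimator.
For every `x` and `t > 0`, `E[‖ĝ_t(x) − g_t(x)‖₂²] ≤ p_t(x) / (n (2πt)^{d/2} t)`. -/
theorem statement_11 (d n : ℕ) (hn : 1 ≤ n) (t : ℝ) (ht : 0 < t)
    (P0 : Measure (Vec d)) (hP0 : IsProbabilityMeasure P0) (x : Vec d) :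
    (∫ X, ‖gHat t X x - gBar P0 t x‖ ^ 2 ∂(Measure.pi fun _ : Fin n => P0))
      ≤ densVE P0 t x / (n * (2 * π * t) ^ ((d : ℝ) / 2) * t) := by
  have hn0 : (0:ℝ) < n := by exact_mod_cast Nat.lt_of_lt_of_le Nat.zero_lt_one hn
  set A : ℝ := (2 * π * t) ^ (-(d : ℝ) / 2) with hAdef
  have hA : 0 < A := Real.rpow_pos_of_pos (by positivity) _
  set f : Vec d → Vec d := fun y => (t⁻¹ * gaussKernel d t (y - x)) • (y - x) with hfdef
  have hgK : Continuous (fun z : Vec d => gaussKernel d t z) := by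
    unfold gaussKernel
    fun_prop
  have hfc : Continuous f :=
    ((continuous_const.mul (hgK.comp (continuous_id.sub continuous_const))).smul
      (continuous_id.sub continuous_const))
  have hf_sq : ∀ y, ‖f y‖ ^ 2 ≤ A * t⁻¹ * gaussKernel d t (y - x) :=
    fun y => key_bound d ht (y - x)
  set C : ℝ := Real.sqrt (A * t⁻¹ * A) with hCdef
  have hfb : ∀ y, ‖f y‖ ≤ C := by
    intro y
    have h1 : ‖f y‖ ^ 2 ≤ A * t⁻¹ * A :=
      le_trans (hf_sq y) (mul_le_mul_of_nonneg_left (gaussKernel_le d ht (y - x))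
        (by positivity))
    have h2 := Real.sqrt_le_sqrt h1
    rwa [Real.sqrt_sq (norm_nonneg _)] at h2
  have hfint : Integrable f P0 :=
    Integrable.mono' (integrable_const C) hfc.aestronglyMeasurable (ae_of_all _ hfb)
  set μf : Vec d := ∫ y, f y ∂P0 with hμf
  set g : Vec d → Vec d := fun y => f y - μf with hgdef
  have hgc : Continuous g := hfc.sub continuous_const
  have hgb : ∀ y, ‖g y‖ ≤ C + ‖μf‖ := fun y =>
    le_trans (norm_sub_le _ _) (add_le_add_left (hfb y) _)
  have hgmean : ∫ y, g y ∂P0 = 0 := by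
    rw [hgdef]
    rw [integral_sub hfint (integrable_const μf), integral_const, probReal_univ]
    simp
    exact sub_self _
  -- rewrite the difference of estimators
  have hrw : ∀ X : Fin n → Vec d, gHat t X x - gBar P0 t x = (n:ℝ)⁻¹ • ∑ i, g (X i) := by
    intro X
    have hBar : gBar P0 t x = μf := by
      rw [gBar, hμf, ← integral_smul]
      congr 1
      funext y
      rw [hfdef, smul_smul]
    have hHat : gHat t X x = (n:ℝ)⁻¹ • ∑ i, f (X i) := by
      rw [gHat, mul_inv, ← smul_smul, Finset.smul_sum]
      simp only [hfdef, smul_smul]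
    rw [hBar, hHat, hgdef]
    have hsum : ∑ i, (f (X i) - μf) = (∑ i, f (X i)) - (n:ℝ) • μf := by
      rw [Finset.sum_sub_distrib, Finset.sum_const, Finset.card_univ, Fintype.card_fin,
        ← Nat.cast_smul_eq_nsmul ℝ]
    rw [hsum, smul_sub, smul_smul, inv_mul_cancel₀ (ne_of_gt hn0), one_smul]
  have hLHS : (∫ X, ‖gHat t X x - gBar P0 t x‖ ^ 2 ∂(Measure.pi fun _ : Fin n => P0))
      = ((n:ℝ)⁻¹)^2 * (n * ∫ y, ‖g y‖ ^ 2 ∂P0) := by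
    rw [← pi_var_sum P0 g hgc (C + ‖μf‖) hgb hgmean, ← integral_const_mul]
    refine integral_congr_ae (ae_of_all _ fun X => ?_)
    show ‖gHat t X x - gBar P0 t x‖ ^ 2 = ((n:ℝ)⁻¹)^2 * ‖∑ i, g (X i)‖ ^ 2
    rw [hrw X, norm_smul, Real.norm_eq_abs, abs_of_nonneg (by positivity : (0:ℝ) ≤ (n:ℝ)⁻¹),
      mul_pow]
  -- integrabilities for the variance comparison
  have hif2 : Integrable (fun y => ‖f y‖ ^ 2) P0 := by
    refine Integrable.mono' (integrable_const (C ^ 2)) (hfc.norm.pow 2).aestronglyMeasurable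
      (ae_of_all _ fun y => ?_)
    rw [Real.norm_eq_abs, abs_of_nonneg (by positivity)]
    exact pow_le_pow_left₀ (norm_nonneg _) (hfb y) 2
  have hiinner : Integrable (fun y => ⟪μf, f y⟫_ℝ) P0 := hfint.const_inner μf
  have hV : (∫ y, ‖g y‖ ^ 2 ∂P0) ≤ ∫ y, ‖f y‖ ^ 2 ∂P0 := by
    have hexp : ∀ y, ‖g y‖ ^ 2 = ‖f y‖ ^ 2 - 2 * ⟪μf, f y⟫_ℝ + ‖μf‖ ^ 2 := by
      intro y
      rw [hgdef]
      show ‖f y - μf‖ ^ 2 = _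
      rw [norm_sub_sq_real, real_inner_comm]
    have heq : (∫ y, ‖g y‖ ^ 2 ∂P0)
        = (∫ y, ‖f y‖ ^ 2 ∂P0) - 2 * ⟪μf, μf⟫_ℝ + ‖μf‖ ^ 2 := by
      have h0 : (∫ y, ‖g y‖ ^ 2 ∂P0)
          = ∫ y, (‖f y‖ ^ 2 - 2 * ⟪μf, f y⟫_ℝ + ‖μf‖ ^ 2) ∂P0 := by
        refine integral_congr_ae (ae_of_all _ fun y => ?_)
        show ‖g y‖ ^ 2 = _
        exact hexp y
      have hI2 : Integrable (fun y => 2 * ⟪μf, f y⟫_ℝ) P0 := hiinner.const_mul 2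
      have hI1 : Integrable (fun y => ‖f y‖ ^ 2 - 2 * ⟪μf, f y⟫_ℝ) P0 := hif2.sub hI2
      rw [h0, integral_add hI1 (integrable_const _),
        integral_sub hif2 hI2, integral_const_mul,
        integral_inner hfint μf, integral_const, probReal_univ]
      simp
      exact real_inner_self_eq_norm_sq μf
    rw [heq, real_inner_self_eq_norm_sq]
    nlinarith [sq_nonneg ‖μf‖]
  -- pointwise bound integral
  have hiφ : Integrable (fun y => A * t⁻¹ * gaussKernel d t (y - x)) P0 := by
    refine Integrable.mono' (integrable_const (A * t⁻¹ * A))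
      ((continuous_const.mul (hgK.comp (continuous_id.sub continuous_const))).aestronglyMeasurable)
      (ae_of_all _ fun y => ?_)
    rw [Real.norm_eq_abs, abs_of_nonneg (mul_nonneg (by positivity) (gaussKernel_nonneg d ht (y - x)))]
    exact mul_le_mul_of_nonneg_left (gaussKernel_le d ht (y - x)) (by positivity)
  have hF : (∫ y, ‖f y‖ ^ 2 ∂P0) ≤ A * t⁻¹ * densVE P0 t x := by
    have h1 : (∫ y, ‖f y‖ ^ 2 ∂P0) ≤ ∫ y, A * t⁻¹ * gaussKernel d t (y - x) ∂P0 :=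
      integral_mono hif2 hiφ hf_sq
    have h2 : (∫ y, A * t⁻¹ * gaussKernel d t (y - x) ∂P0)
        = A * t⁻¹ * densVE P0 t x := by
      rw [integral_const_mul, densVE]
      congr 1
      refine integral_congr_ae (ae_of_all _ fun y => ?_)
      show gaussKernel d t (y - x) = gaussKernel d t (x - y)
      unfold gaussKernel
      rw [norm_sub_rev]
    rw [h2] at h1
    exact h1
  -- assemble
  rw [hLHS]
  have hchain : ((n:ℝ)⁻¹)^2 * (n * ∫ y, ‖g y‖ ^ 2 ∂P0)
      ≤ ((n:ℝ)⁻¹)^2 * (n * (A * t⁻¹ * densVE P0 t x)) := by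
    apply mul_le_mul_of_nonneg_left _ (by positivity)
    exact mul_le_mul_of_nonneg_left (le_trans hV hF) (le_of_lt hn0)
  refine le_trans hchain (le_of_eq ?_)
  have hApos : (0:ℝ) < 2 * π * t := by positivity
  have hAinv : A = ((2 * π * t) ^ ((d : ℝ) / 2))⁻¹ := by
    rw [hAdef, neg_div, Real.rpow_neg hApos.le]
  rw [hAinv]
  have hB : (0:ℝ) < (2 * π * t) ^ ((d : ℝ) / 2) := Real.rpow_pos_of_pos hApos _
  field_simp
end
end

section
/- For every x ∈ R^d and t > 0, the empirical second-moment kernel matrix Ĥ_t(x) := (1/(nt²)) Σᵢ (X⁽ⁱ⁾ − x)(X⁽ⁱ⁾ − x)^⊤ φ_t(X⁽ⁱ⁾ − x) satisfies E[‖Ĥ_t(x) − H_t(x)‖] ≲ 1/(n(2πt)^{d/2}·t) + (1/t)·sqrt(p_t(x)/(n(2πt)^{d/2})), where H_t(x) := E[Ĥ_t(x)] = (1/t²)·E[(Z₀ − x)(Z₀ − x)^⊤ φ_t(Z₀ − x)] and ‖·‖ is the matrix spectral norm. -/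
open MeasureTheory ProbabilityTheory Real
open scoped InnerProductSpace ENNReal NNReal BigOperators

noncomputable section

lemma exp_lin {t u : ℝ} (ht : 0 < t) (hu : 0 ≤ u) :
    u * Real.exp (-u / (2 * t)) ≤ 2 * t := by
  have h1 : u / (2 * t) + 1 ≤ Real.exp (u / (2 * t)) := Real.add_one_le_exp _
  have h2 : u ≤ 2 * t * Real.exp (u / (2 * t)) := by
    have h2t : (0:ℝ) < 2 * t := by linarith
    calc u = 2 * t * (u / (2 * t)) := by field_simp
    _ ≤ 2 * t * Real.exp (u / (2 * t)) := by nlinarith [Real.exp_pos (u / (2*t))]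
  have h3 : Real.exp (-u / (2 * t)) = (Real.exp (u / (2 * t)))⁻¹ := by
    rw [← Real.exp_neg]; ring_nf
  rw [h3]
  have hep : 0 < Real.exp (u / (2 * t)) := Real.exp_pos _
  rw [mul_inv_le_iff₀ hep]
  nlinarith

lemma exp_quad {t u : ℝ} (ht : 0 < t) (hu : 0 ≤ u) :
    u ^ 2 * Real.exp (-u / (2 * t)) ≤ 16 * t ^ 2 := by
  have h1 : u / (4 * t) + 1 ≤ Real.exp (u / (4 * t)) := Real.add_one_le_exp _
  have h4t : (0:ℝ) < 4 * t := by linarith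
  have h2 : u ≤ 4 * t * Real.exp (u / (4 * t)) := by
    calc u = 4 * t * (u / (4 * t)) := by field_simp
    _ ≤ 4 * t * Real.exp (u / (4 * t)) := by nlinarith [Real.exp_pos (u / (4*t))]
  have hsq : Real.exp (u / (4 * t)) ^ 2 = Real.exp (u / (2 * t)) := by
    rw [sq, ← Real.exp_add]; congr 1; field_simp; ring
  have h3 : Real.exp (-u / (2 * t)) = (Real.exp (u / (2 * t)))⁻¹ := by
    rw [← Real.exp_neg]; ring_nf
  rw [h3]
  have hep : 0 < Real.exp (u / (2 * t)) := Real.exp_pos _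
  rw [mul_inv_le_iff₀ hep]
  calc u ^ 2 ≤ (4 * t * Real.exp (u / (4 * t))) ^ 2 := by
        nlinarith [Real.exp_pos (u / (4*t))]
  _ = 16 * t ^ 2 * Real.exp (u / (2 * t)) := by rw [mul_pow, mul_pow, ← hsq]; ring

lemma sqrt_le_one_add {u : ℝ} (hu : 0 ≤ u) : Real.sqrt u ≤ 1 + u := by
  nlinarith [Real.sq_sqrt hu, Real.sqrt_nonneg u]

lemma integral_sqrt_le {α : Type*} [MeasurableSpace α] {μ : Measure α}
    [IsProbabilityMeasure μ] {f : α → ℝ} (hf : Integrable f μ) (h0 : ∀ x, 0 ≤ f x) :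
    ∫ x, Real.sqrt (f x) ∂μ ≤ Real.sqrt (∫ x, f x ∂μ) := by
  have hsm : Integrable (fun x => Real.sqrt (f x)) μ := by
    refine Integrable.mono' ((integrable_const 1).add hf) ?_ (ae_of_all _ fun x => ?_)
    · exact (Real.continuous_sqrt.comp_aestronglyMeasurable hf.aestronglyMeasurable)
    · rw [Real.norm_eq_abs, abs_of_nonneg (Real.sqrt_nonneg _)]
      exact sqrt_le_one_add (h0 x)
  set a := ∫ x, Real.sqrt (f x) ∂μ with ha
  have ha0 : 0 ≤ a := integral_nonneg fun x => Real.sqrt_nonneg _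
  have hI0 : 0 ≤ ∫ x, f x ∂μ := integral_nonneg h0
  rw [show Real.sqrt (∫ x, f x ∂μ) = Real.sqrt (∫ x, f x ∂μ) from rfl]
  have key : a ^ 2 ≤ ∫ x, f x ∂μ := by
    have hexp : ∫ x, (Real.sqrt (f x) - a) ^ 2 ∂μ = (∫ x, f x ∂μ) - a ^ 2 := by
      have : ∀ x, (Real.sqrt (f x) - a) ^ 2 = f x - 2 * a * Real.sqrt (f x) + a ^ 2 := by
        intro x; rw [sub_sq]; rw [Real.sq_sqrt (h0 x)]; ring
      calc ∫ x, (Real.sqrt (f x) - a) ^ 2 ∂μ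
          = ∫ x, (f x - 2 * a * Real.sqrt (f x) + a ^ 2) ∂μ := by
            exact integral_congr_ae (ae_of_all _ this)
      _ = (∫ x, f x ∂μ) - a ^ 2 := by
            have h1 : Integrable (fun x => f x - 2 * a * Real.sqrt (f x)) μ :=
              hf.sub (hsm.const_mul (2 * a))
            rw [integral_add h1 (integrable_const _),
              integral_sub hf (hsm.const_mul (2 * a)), integral_const_mul]
            simp [← ha]; ring
    have hnn : 0 ≤ ∫ x, (Real.sqrt (f x) - a) ^ 2 ∂μ := integral_nonneg fun x => sq_nonneg _
    linarith [hexp ▸ hnn]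
  calc a = Real.sqrt (a ^ 2) := by rw [Real.sqrt_sq ha0]
  _ ≤ Real.sqrt (∫ x, f x ∂μ) := Real.sqrt_le_sqrt key

lemma opnorm_le_frob {d : ℕ} (A : Vec d →L[ℝ] Vec d) :
    ‖A‖ ≤ Real.sqrt (∑ i, ∑ j, (A (EuclideanSpace.single j 1) i) ^ 2) := by
  set S := ∑ i, ∑ j, (A (EuclideanSpace.single j 1) i) ^ 2 with hS
  have hS0 : 0 ≤ S := Finset.sum_nonneg fun _ _ => Finset.sum_nonneg fun _ _ => sq_nonneg _
  refine A.opNorm_le_bound (Real.sqrt_nonneg _) fun v => ?_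
  have hv : ∑ j, v j • (EuclideanSpace.single j (1:ℝ) : Vec d) = v := by
    simpa [EuclideanSpace.basisFun_apply, EuclideanSpace.basisFun_repr] using
      (EuclideanSpace.basisFun (Fin d) ℝ).sum_repr v
  have hAvi : ∀ i, A v i = ∑ j, v j * A (EuclideanSpace.single j 1) i := by
    intro i
    have h1 : A v = ∑ j, v j • A (EuclideanSpace.single j 1) := by
      conv_lhs => rw [← hv]
      rw [map_sum]; simp [_root_.map_smul]
    have h2 := congrArg (EuclideanSpace.proj (𝕜 := ℝ) i) h1
    simpa [map_sum, _root_.map_smul] using h2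
  have hnorm2 : ‖A v‖ ^ 2 = ∑ i, (A v i) ^ 2 := by
    rw [EuclideanSpace.norm_eq, Real.sq_sqrt (Finset.sum_nonneg fun _ _ => sq_nonneg _)]
    simp [sq_abs]
  have hv2 : ‖v‖ ^ 2 = ∑ j, (v j) ^ 2 := by
    rw [EuclideanSpace.norm_eq, Real.sq_sqrt (Finset.sum_nonneg fun _ _ => sq_nonneg _)]
    simp [sq_abs]
  have hsq : ‖A v‖ ^ 2 ≤ S * ‖v‖ ^ 2 := by
    rw [hnorm2, hv2]
    calc ∑ i, (A v i) ^ 2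
        ≤ ∑ i, (∑ j, (v j) ^ 2) * (∑ j, (A (EuclideanSpace.single j 1) i) ^ 2) := by
          refine Finset.sum_le_sum fun i _ => ?_
          rw [hAvi i]
          exact Finset.sum_mul_sq_le_sq_mul_sq _ _ _
    _ = S * ∑ j, (v j) ^ 2 := by rw [← Finset.mul_sum, hS]; ring
  calc ‖A v‖ = Real.sqrt (‖A v‖ ^ 2) := by rw [Real.sqrt_sq (norm_nonneg _)]
  _ ≤ Real.sqrt (S * ‖v‖ ^ 2) := Real.sqrt_le_sqrt hsq
  _ = Real.sqrt S * ‖v‖ := by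
      rw [Real.sqrt_mul hS0, Real.sqrt_sq (norm_nonneg _)]

lemma prod_two_eq {α : Type*} {n : ℕ} (c : α → ℝ) (k l : Fin n) (X : Fin n → α) :
    c (X k) * c (X l) =
      ∏ i, ((if k = i then c (X i) else 1) * (if l = i then c (X i) else 1)) := by
  rw [Finset.prod_mul_distrib, Finset.prod_ite_eq, Finset.prod_ite_eq]
  simp

lemma var_mean {α : Type*} [MeasurableSpace α] (ν : Measure α) [IsProbabilityMeasure ν]
    {n : ℕ} (hn : 1 ≤ n) (g : α → ℝ) (hgm : Measurable g) (B : ℝ) (hgb : ∀ z, |g z| ≤ B) :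
    ∫ X : Fin n → α, ((n : ℝ)⁻¹ * ∑ k, g (X k) - ∫ z, g z ∂ν) ^ 2
        ∂(Measure.pi fun _ : Fin n => ν)
      ≤ (∫ z, (g z) ^ 2 ∂ν) / n := by
  letI : MeasureSpace α := ⟨ν⟩
  haveI : IsProbabilityMeasure (volume : Measure α) := ‹IsProbabilityMeasure ν›
  have hpi : (Measure.pi fun _ : Fin n => ν) = (volume : Measure (Fin n → α)) :=
    (MeasureTheory.volume_pi).symm
  haveI : IsProbabilityMeasure (volume : Measure (Fin n → α)) := by
    rw [← hpi]; infer_instance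
  set m := ∫ z, g z ∂ν with hm
  set c : α → ℝ := fun z => g z - m with hc
  have hgi : Integrable g ν := by
    refine Integrable.mono' (integrable_const B) hgm.aestronglyMeasurable
      (ae_of_all _ fun z => ?_)
    rw [Real.norm_eq_abs]; exact hgb z
  have hcm : Measurable c := hgm.sub measurable_const
  have hcb : ∀ z, |c z| ≤ B + |m| := fun z => by
    calc |c z| ≤ |g z| + |m| := abs_sub _ _
    _ ≤ B + |m| := by linarith [hgb z]
  have hci : Integrable c ν := hgi.sub (integrable_const m)
  have hc0 : ∫ z, c z ∂ν = 0 := by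
    rw [hc]; rw [integral_sub hgi (integrable_const m)]; simp [hm]
  have hc2i : Integrable (fun z => c z ^ 2) ν := by
    refine Integrable.mono' (integrable_const ((B + |m|) ^ 2))
      ((hcm.pow_const 2).aestronglyMeasurable) (ae_of_all _ fun z => ?_)
    rw [Real.norm_eq_abs, abs_pow]
    have := hcb z
    have h0 : (0:ℝ) ≤ |c z| := abs_nonneg _
    nlinarith
  -- key computation
  have key : ∫ X : Fin n → α, (∑ k, c (X k)) ^ 2 ∂(Measure.pi fun _ : Fin n => ν)
      = n * ∫ z, c z ^ 2 ∂ν := by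
    rw [hpi]
    have hterm : ∀ k l : Fin n,
        ∫ X : Fin n → α, c (X k) * c (X l) = if k = l then ∫ z, c z ^ 2 ∂ν else 0 := by
      intro k l
      have hrw : (fun X : Fin n → α => c (X k) * c (X l)) =
          fun X : Fin n → α =>
            ∏ i, ((if k = i then c (X i) else 1) * (if l = i then c (X i) else 1)) := by
        funext X; exact prod_two_eq c k l X
      rw [hrw, MeasureTheory.integral_fintype_prod_volume_eq_prod (𝕜 := ℝ)
        (f := fun i z => (if k = i then c z else 1) * (if l = i then c z else 1))]
      by_cases hkl : k = l
      · subst hkl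
        rw [if_pos rfl]
        rw [Fintype.prod_eq_single k]
        · have heq : (fun z : α => (if k = k then c z else 1) * (if k = k then c z else 1))
              = fun z : α => c z ^ 2 := by funext z; simp [sq]
          rw [heq]
          rfl
        · intro i hi
          have heq : (fun z : α => (if k = i then c z else 1) * (if k = i then c z else 1))
              = fun _ : α => (1:ℝ) := by
            funext z; rw [if_neg (fun h => hi h.symm), one_mul]
          rw [heq]
          simp
      · rw [if_neg hkl]
        refine Finset.prod_eq_zero (Finset.mem_univ k) ?_
        have heq : (fun z : α => (if k = k then c z else 1) * (if l = k then c z else 1)) = c := by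
          funext z; rw [if_pos rfl, if_neg (fun h => hkl h.symm), mul_one]
        rw [heq]
        exact hc0
    have hexp : ∀ X : Fin n → α, (∑ k, c (X k)) ^ 2 = ∑ k, ∑ l, c (X k) * c (X l) := by
      intro X; rw [sq, Finset.sum_mul_sum]
    simp_rw [hexp]
    have hint : ∀ k l : Fin n, Integrable (fun X : Fin n → α => c (X k) * c (X l)) := by
      intro k l
      refine Integrable.mono' (integrable_const ((B + |m|) ^ 2))
        (((hcm.comp (measurable_pi_apply k)).mul
          (hcm.comp (measurable_pi_apply l))).aestronglyMeasurable)
        (ae_of_all _ fun X => ?_)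
      rw [Real.norm_eq_abs, abs_mul]
      have h1 := hcb (X k); have h2 := hcb (X l)
      have h01 : (0:ℝ) ≤ |c (X k)| := abs_nonneg _
      have h02 : (0:ℝ) ≤ |c (X l)| := abs_nonneg _
      nlinarith
    rw [integral_finset_sum _ (fun k _ => integrable_finset_sum _ (fun l _ => hint k l))]
    simp_rw [integral_finset_sum _ (fun l (_ : l ∈ Finset.univ) => hint _ l)]
    simp_rw [hterm]
    simp [Finset.sum_ite_eq]
  -- relate to the goal
  have hn0 : (0:ℝ) < n := by exact_mod_cast Nat.lt_of_lt_of_le Nat.zero_lt_one hn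
  have hrw2 : ∀ X : Fin n → α,
      ((n : ℝ)⁻¹ * ∑ k, g (X k) - m) ^ 2 = ((n:ℝ)⁻¹) ^ 2 * (∑ k, c (X k)) ^ 2 := by
    intro X
    have h1 : ∑ k, c (X k) = (∑ k, g (X k)) - n * m := by
      rw [hc]; rw [Finset.sum_sub_distrib]; simp [mul_comm]
    rw [h1]
    have h2 : (n : ℝ)⁻¹ * ∑ k, g (X k) - m = (n:ℝ)⁻¹ * ((∑ k, g (X k)) - n * m) := by
      field_simp
    rw [h2, mul_pow]
  simp_rw [hrw2]
  rw [integral_const_mul, key]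
  have hc2g : ∫ z, c z ^ 2 ∂ν ≤ ∫ z, g z ^ 2 ∂ν := by
    have hexp : ∀ z, c z ^ 2 = g z ^ 2 - (2 * m * g z - m ^ 2) := by
      intro z; rw [hc]; ring
    simp_rw [hexp]
    have hg2i : Integrable (fun z => g z ^ 2) ν := by
      refine Integrable.mono' (integrable_const (B ^ 2))
        ((hgm.pow_const 2).aestronglyMeasurable) (ae_of_all _ fun z => ?_)
      rw [Real.norm_eq_abs, abs_pow]
      have := hgb z; have h0 : (0:ℝ) ≤ |g z| := abs_nonneg _
      nlinarith
    have hsubi : Integrable (fun z => 2 * m * g z - m ^ 2) ν :=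
      (hgi.const_mul (2*m)).sub (integrable_const (m^2))
    rw [integral_sub hg2i hsubi]
    rw [integral_sub (hgi.const_mul (2*m)) (integrable_const (m^2)), integral_const_mul]
    simp [← hm]
    nlinarith [sq_nonneg m]
  calc ((n:ℝ)⁻¹) ^ 2 * ((n:ℝ) * ∫ z, c z ^ 2 ∂ν)
      = (∫ z, c z ^ 2 ∂ν) / n := by field_simp
  _ ≤ (∫ z, g z ^ 2 ∂ν) / n := by gcongr
set_option maxHeartbeats 1600000 in
/-- Lemma: expected spectral-norm error of `Ĥ_t`.
`E[‖Ĥ_t(x) − H_t(x)‖] ≲ 1/(n (2πt)^{d/2} t) + (1/t)·sqrt(p_t(x)/(n (2πt)^{d/2}))`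
with an absolute implied constant. -/
theorem statement_12 :
    ∃ C : ℝ, 0 < C ∧
      ∀ (d n : ℕ) (t : ℝ) (P0 : Measure (Vec d)) (x : Vec d),
        1 ≤ n → 0 < t → IsProbabilityMeasure P0 →
        (∫ X, ‖hHat t X x - hBar P0 t x‖ ∂(Measure.pi fun _ : Fin n => P0))
          ≤ C * (1 / (n * (2 * π * t) ^ ((d : ℝ) / 2) * t) +
              1 / t * Real.sqrt (densVE P0 t x / (n * (2 * π * t) ^ ((d : ℝ) / 2)))) := by
  refine ⟨4, by norm_num, ?_⟩
  intro d n t P0 x hn ht hP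
  haveI := hP
  set μ := Measure.pi fun _ : Fin n => P0 with hμ
  haveI : IsProbabilityMeasure μ := by rw [hμ]; infer_instance
  have hπ := Real.pi_pos
  have h2πt : (0:ℝ) < 2 * π * t := by positivity
  have hn0 : (0:ℝ) < n := by exact_mod_cast Nat.lt_of_lt_of_le Nat.zero_lt_one hn
  set K0 : ℝ := (2 * π * t) ^ (-(d:ℝ) / 2) with hK0def
  have hK0 : 0 < K0 := Real.rpow_pos_of_pos h2πt _
  set k : Vec d → ℝ := fun z => gaussKernel d t (z - x) with hkdef
  have hk_eq : ∀ z, k z = K0 * Real.exp (-‖z - x‖ ^ 2 / (2 * t)) := fun z => rfl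
  have hk_nonneg : ∀ z, 0 ≤ k z := fun z => by
    rw [hk_eq]; positivity
  have hk_le : ∀ z, k z ≤ K0 := fun z => by
    rw [hk_eq]
    have h1 : Real.exp (-‖z - x‖ ^ 2 / (2 * t)) ≤ 1 := by
      rw [Real.exp_le_one_iff]
      have h2t : (0:ℝ) < 2 * t := by linarith
      have h3 : (0:ℝ) ≤ ‖z - x‖ ^ 2 / (2 * t) := div_nonneg (sq_nonneg _) h2t.le
      rw [neg_div]
      linarith
    nlinarith
  have hk_cont : Continuous k := by
    rw [hkdef]
    unfold gaussKernel
    exact continuous_const.mul (Real.continuous_exp.comp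
      (((continuous_norm.comp (continuous_id.sub continuous_const)).pow 2).neg.div_const _))
  have hk_int : Integrable k P0 :=
    Integrable.mono' (integrable_const K0) hk_cont.aestronglyMeasurable
      (ae_of_all _ fun z => by
        rw [Real.norm_eq_abs, abs_of_nonneg (hk_nonneg z)]; exact hk_le z)
  -- kernel-moment bounds
  have hker1 : ∀ z, k z * ‖z - x‖ ^ 2 ≤ K0 * (2 * t) := by
    intro z
    rw [hk_eq]
    have h1 := exp_lin ht (sq_nonneg (‖z - x‖))
    nlinarith [Real.exp_pos (-‖z - x‖ ^ 2 / (2 * t))]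
  have hker2 : ∀ z, k z * ‖z - x‖ ^ 4 ≤ K0 * (16 * t ^ 2) := by
    intro z
    rw [hk_eq]
    have h4 : ‖z - x‖ ^ 4 = (‖z - x‖ ^ 2) ^ 2 := by ring
    rw [h4]
    have h1 := exp_quad ht (sq_nonneg (‖z - x‖))
    nlinarith [Real.exp_pos (-‖z - x‖ ^ 2 / (2 * t))]
  -- coordinates
  have hnorm_sq : ∀ v : Vec d, ‖v‖ ^ 2 = ∑ i, (v i) ^ 2 := by
    intro v
    rw [EuclideanSpace.norm_eq, Real.sq_sqrt (Finset.sum_nonneg fun _ _ => sq_nonneg _)]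
    simp [sq_abs]
  have habs : ∀ (v : Vec d) (i : Fin d), |v i| ≤ ‖v‖ := by
    intro v i
    have h1 : (v i) ^ 2 ≤ ∑ j, (v j) ^ 2 :=
      Finset.single_le_sum (f := fun j => (v j) ^ 2) (fun j _ => sq_nonneg _) (Finset.mem_univ i)
    calc |v i| = Real.sqrt ((v i) ^ 2) := (Real.sqrt_sq_eq_abs _).symm
    _ ≤ Real.sqrt (∑ j, (v j) ^ 2) := Real.sqrt_le_sqrt h1
    _ = ‖v‖ := by rw [← hnorm_sq, Real.sqrt_sq (norm_nonneg _)]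
  have hcoord_cont : ∀ i : Fin d, Continuous fun z : Vec d => (z - x) i := fun i =>
    (EuclideanSpace.proj (𝕜 := ℝ) i).continuous.comp (continuous_id.sub continuous_const)
  -- the entry functions
  set g : Fin d → Fin d → Vec d → ℝ :=
    fun i j z => (t ^ 2)⁻¹ * (k z * ((z - x) i * (z - x) j)) with hgdef
  have hg_cont : ∀ i j, Continuous (g i j) := fun i j =>
    continuous_const.mul (hk_cont.mul ((hcoord_cont i).mul (hcoord_cont j)))
  set Bg : ℝ := (t ^ 2)⁻¹ * (K0 * (2 * t)) with hBgdef
  have hBg0 : 0 ≤ Bg := by rw [hBgdef]; positivity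
  have hprod_le : ∀ (z : Vec d) (i j : Fin d), |(z - x) i * (z - x) j| ≤ ‖z - x‖ ^ 2 := by
    intro z i j
    rw [abs_mul]
    calc |(z - x) i| * |(z - x) j| ≤ ‖z - x‖ * ‖z - x‖ :=
      mul_le_mul (habs _ _) (habs _ _) (abs_nonneg _) (norm_nonneg _)
    _ = ‖z - x‖ ^ 2 := (sq _).symm
  have hg_bound : ∀ i j z, |g i j z| ≤ Bg := by
    intro i j z
    simp only [hgdef, hBgdef]
    rw [abs_mul, abs_mul, abs_of_nonneg (by positivity : (0:ℝ) ≤ (t ^ 2)⁻¹),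
      abs_of_nonneg (hk_nonneg z)]
    have h1 : (0:ℝ) ≤ (t ^ 2)⁻¹ := by positivity
    calc (t ^ 2)⁻¹ * (k z * |(z - x) i * (z - x) j|)
        ≤ (t ^ 2)⁻¹ * (k z * ‖z - x‖ ^ 2) :=
          mul_le_mul_of_nonneg_left
            (mul_le_mul_of_nonneg_left (hprod_le z i j) (hk_nonneg z)) h1
    _ ≤ (t ^ 2)⁻¹ * (K0 * (2 * t)) :=
          mul_le_mul_of_nonneg_left (hker1 z) h1
  have hg_meas : ∀ i j, Measurable (g i j) := fun i j => (hg_cont i j).measurable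
  have hg_int : ∀ i j, Integrable (g i j) P0 := fun i j =>
    Integrable.mono' (integrable_const Bg) (hg_cont i j).aestronglyMeasurable
      (ae_of_all _ fun z => by rw [Real.norm_eq_abs]; exact hg_bound i j z)
  have hg2_int : ∀ i j, Integrable (fun z => (g i j z) ^ 2) P0 := by
    intro i j
    refine Integrable.mono' (integrable_const (Bg ^ 2))
      (((hg_meas i j).pow_const 2).aestronglyMeasurable) (ae_of_all _ fun z => ?_)
    rw [Real.norm_eq_abs, abs_pow]
    exact pow_le_pow_left₀ (abs_nonneg _) (hg_bound i j z) 2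
  -- outer product facts
  have houter_single : ∀ (v : Vec d) (i j : Fin d),
      (outerCLM v) (EuclideanSpace.single j 1) i = v j * v i := by
    intro v i j
    show (⟪v, EuclideanSpace.single j (1:ℝ)⟫_ℝ • v) i = v j * v i
    rw [EuclideanSpace.inner_single_right]
    simp [PiLp.smul_apply]
  have houter_norm : ∀ v : Vec d, ‖outerCLM v‖ ≤ ‖v‖ ^ 2 := by
    intro v
    refine ContinuousLinearMap.opNorm_le_bound _ (sq_nonneg _) fun w => ?_
    show ‖⟪v, w⟫_ℝ • v‖ ≤ ‖v‖ ^ 2 * ‖w‖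
    rw [norm_smul, Real.norm_eq_abs]
    calc |⟪v, w⟫_ℝ| * ‖v‖ ≤ (‖v‖ * ‖w‖) * ‖v‖ :=
      mul_le_mul_of_nonneg_right (abs_real_inner_le_norm v w) (norm_nonneg _)
    _ = ‖v‖ ^ 2 * ‖w‖ := by ring
  have houter_cont : Continuous fun v : Vec d => outerCLM v := by
    have h1 : Continuous fun v : Vec d =>
        ContinuousLinearMap.smulRightL ℝ (Vec d) (Vec d) (innerSL ℝ v) :=
      (ContinuousLinearMap.smulRightL ℝ (Vec d) (Vec d)).continuous.comp (innerSL ℝ).continuous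
    exact h1.clm_apply continuous_id
  -- integrability of the operator-valued integrand
  have hinteg1 : Integrable (fun y => gaussKernel d t (y - x) • outerCLM (y - x)) P0 := by
    refine Integrable.mono' (integrable_const (K0 * (2 * t)))
      ((hk_cont.smul (houter_cont.comp (continuous_id.sub continuous_const))).aestronglyMeasurable)
      (ae_of_all _ fun y => ?_)
    show ‖gaussKernel d t (y - x) • outerCLM (y - x)‖ ≤ K0 * (2 * t)
    refine le_trans (ContinuousLinearMap.opNorm_smul_le _ _) ?_
    rw [Real.norm_eq_abs]
    have h0 : |gaussKernel d t (y - x)| = k y := abs_of_nonneg (hk_nonneg y)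
    rw [h0]
    calc k y * ‖outerCLM (y - x)‖ ≤ k y * ‖y - x‖ ^ 2 :=
      mul_le_mul_of_nonneg_left (houter_norm _) (hk_nonneg y)
    _ ≤ K0 * (2 * t) := hker1 y
  -- entry formulas
  have hBar_entry : ∀ i j : Fin d,
      (hBar P0 t x) (EuclideanSpace.single j 1) i = ∫ z, g i j z ∂P0 := by
    intro i j
    show (((t ^ 2)⁻¹ : ℝ) • (∫ y, gaussKernel d t (y - x) • outerCLM (y - x) ∂P0))
        (EuclideanSpace.single j 1) i = ∫ z, g i j z ∂P0
    rw [ContinuousLinearMap.smul_apply]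
    rw [ContinuousLinearMap.integral_apply hinteg1]
    rw [PiLp.smul_apply, smul_eq_mul]
    have hI2 : Integrable
        (fun y => (gaussKernel d t (y - x) • outerCLM (y - x)) (EuclideanSpace.single j 1)) P0 :=
      hinteg1.apply_continuousLinearMap _
    have h2 : (∫ y, (gaussKernel d t (y - x) • outerCLM (y - x))
          (EuclideanSpace.single j 1) ∂P0) i
        = ∫ y, ((gaussKernel d t (y - x) • outerCLM (y - x)) (EuclideanSpace.single j 1)) i ∂P0 :=
      ((EuclideanSpace.proj (𝕜 := ℝ) i).integral_comp_comm hI2).symm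
    rw [h2]
    have h3 : ∀ y : Vec d,
        ((gaussKernel d t (y - x) • outerCLM (y - x)) (EuclideanSpace.single j 1)) i
          = k y * ((y - x) j * (y - x) i) := by
      intro y
      rw [ContinuousLinearMap.smul_apply, PiLp.smul_apply, smul_eq_mul, houter_single]
    simp_rw [h3]
    rw [← integral_const_mul]
    refine integral_congr_ae (ae_of_all _ fun z => ?_)
    simp only [hgdef]; ring
  have hHat_entry : ∀ (X : Fin n → Vec d) (i j : Fin d),
      (hHat t X x) (EuclideanSpace.single j 1) i = (n:ℝ)⁻¹ * ∑ q, g i j (X q) := by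
    intro X i j
    show ((((n : ℝ) * t ^ 2)⁻¹ : ℝ) •
        (∑ q, gaussKernel d t (X q - x) • outerCLM (X q - x))) (EuclideanSpace.single j 1) i = _
    rw [ContinuousLinearMap.smul_apply, ContinuousLinearMap.sum_apply]
    rw [PiLp.smul_apply, smul_eq_mul]
    have h4 : (∑ q, (gaussKernel d t (X q - x) • outerCLM (X q - x))
          (EuclideanSpace.single j 1)) i
        = ∑ q, ((gaussKernel d t (X q - x) • outerCLM (X q - x))
          (EuclideanSpace.single j 1)) i :=
      map_sum (EuclideanSpace.proj (𝕜 := ℝ) i)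
        (fun q => (gaussKernel d t (X q - x) • outerCLM (X q - x)) (EuclideanSpace.single j 1))
        Finset.univ
    rw [h4]
    have h3 : ∀ q, ((gaussKernel d t (X q - x) • outerCLM (X q - x))
          (EuclideanSpace.single j 1)) i = k (X q) * ((X q - x) j * (X q - x) i) := by
      intro q
      rw [ContinuousLinearMap.smul_apply, PiLp.smul_apply, smul_eq_mul, houter_single]
    simp_rw [h3]
    rw [mul_inv, Finset.mul_sum, Finset.mul_sum]
    refine Finset.sum_congr rfl fun q _ => ?_
    simp only [hgdef]; ring
  -- entrywise difference
  set D : (Fin n → Vec d) → Fin d → Fin d → ℝ :=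
    fun X i j => (n:ℝ)⁻¹ * ∑ q, g i j (X q) - ∫ z, g i j z ∂P0 with hDdef
  set F : (Fin n → Vec d) → ℝ := fun X => ∑ i, ∑ j, (D X i j) ^ 2 with hFdef
  have hF0 : ∀ X, 0 ≤ F X := fun X =>
    Finset.sum_nonneg fun _ _ => Finset.sum_nonneg fun _ _ => sq_nonneg _
  have step1 : ∀ X, ‖hHat t X x - hBar P0 t x‖ ≤ Real.sqrt (F X) := by
    intro X
    refine le_trans (opnorm_le_frob _) (le_of_eq ?_)
    congr 1
    simp only [hFdef]
    refine Finset.sum_congr rfl fun i _ => Finset.sum_congr rfl fun j _ => ?_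
    congr 1
    have hsub : (hHat t X x - hBar P0 t x) (EuclideanSpace.single j 1) i
        = (hHat t X x) (EuclideanSpace.single j 1) i
          - (hBar P0 t x) (EuclideanSpace.single j 1) i := by
      rw [ContinuousLinearMap.sub_apply]
      exact map_sub (EuclideanSpace.proj (𝕜 := ℝ) i) _ _
    rw [hsub, hHat_entry, hBar_entry]
  -- measurability / boundedness of D
  have hD_meas : ∀ i j, Measurable fun X => D X i j := by
    intro i j
    simp only [hDdef]
    exact ((Finset.measurable_sum Finset.univ fun q _ =>
      (hg_meas i j).comp (measurable_pi_apply q)).const_mul (n:ℝ)⁻¹).sub measurable_const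
  have hD_bound : ∀ (X : Fin n → Vec d) (i j : Fin d), |D X i j| ≤ 2 * Bg := by
    intro X i j
    simp only [hDdef]
    have h1 : |(n:ℝ)⁻¹ * ∑ q, g i j (X q)| ≤ Bg := by
      rw [abs_mul, abs_of_nonneg (by positivity : (0:ℝ) ≤ ((n:ℝ))⁻¹)]
      calc (n:ℝ)⁻¹ * |∑ q, g i j (X q)| ≤ (n:ℝ)⁻¹ * ((n:ℝ) * Bg) := by
            refine mul_le_mul_of_nonneg_left ?_ (by positivity)
            calc |∑ q, g i j (X q)| ≤ ∑ q, |g i j (X q)| := Finset.abs_sum_le_sum_abs _ _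
            _ ≤ ∑ _q : Fin n, Bg := Finset.sum_le_sum fun q _ => hg_bound i j (X q)
            _ = (n:ℝ) * Bg := by rw [Finset.sum_const]; simp [mul_comm]
      _ = Bg := by field_simp
    have h2 : |∫ z, g i j z ∂P0| ≤ Bg := by
      calc |∫ z, g i j z ∂P0| = ‖∫ z, g i j z ∂P0‖ := (Real.norm_eq_abs _).symm
      _ ≤ ∫ z, ‖g i j z‖ ∂P0 := norm_integral_le_integral_norm _
      _ ≤ ∫ _z, Bg ∂P0 := integral_mono (hg_int i j).norm (integrable_const _)
            (fun z => by rw [Real.norm_eq_abs]; exact hg_bound i j z)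
      _ = Bg := by simp
    calc |(n:ℝ)⁻¹ * ∑ q, g i j (X q) - ∫ z, g i j z ∂P0|
        ≤ |(n:ℝ)⁻¹ * ∑ q, g i j (X q)| + |∫ z, g i j z ∂P0| := abs_sub _ _
    _ ≤ 2 * Bg := by linarith
  have hD2_int : ∀ i j, Integrable (fun X => (D X i j) ^ 2) μ := by
    intro i j
    refine Integrable.mono' (integrable_const ((2 * Bg) ^ 2))
      (((hD_meas i j).pow_const 2).aestronglyMeasurable) (ae_of_all _ fun X => ?_)
    rw [Real.norm_eq_abs, abs_pow]
    exact pow_le_pow_left₀ (abs_nonneg _) (hD_bound X i j) 2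
  have hFint : Integrable F μ := by
    simp only [hFdef]
    exact integrable_finset_sum _ fun i _ => integrable_finset_sum _ fun j _ => hD2_int i j
  have hsqrtFint : Integrable (fun X => Real.sqrt (F X)) μ := by
    refine Integrable.mono' ((integrable_const 1).add hFint)
      (Real.continuous_sqrt.comp_aestronglyMeasurable hFint.aestronglyMeasurable)
      (ae_of_all _ fun X => ?_)
    rw [Real.norm_eq_abs, abs_of_nonneg (Real.sqrt_nonneg _)]
    exact sqrt_le_one_add (hF0 X)
  -- the density value
  set p : ℝ := densVE P0 t x with hpdef
  have hdens : ∫ z, k z ∂P0 = p := by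
    rw [hpdef]
    unfold densVE
    refine integral_congr_ae (ae_of_all _ fun z => ?_)
    simp only [hkdef]
    unfold gaussKernel
    rw [norm_sub_rev]
  have hp0 : 0 ≤ p := by
    rw [← hdens]; exact integral_nonneg hk_nonneg
  -- variance bound
  have hIF : ∫ X, F X ∂μ ≤ 16 * K0 * p / ((n:ℝ) * t ^ 2) := by
    have hintF : ∫ X, F X ∂μ = ∑ i, ∑ j, ∫ X, (D X i j) ^ 2 ∂μ := by
      simp only [hFdef]
      rw [integral_finset_sum _ fun i _ => integrable_finset_sum _ fun j _ => hD2_int i j]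
      exact Finset.sum_congr rfl fun i _ => integral_finset_sum _ fun j _ => hD2_int i j
    rw [hintF]
    have hvar : ∀ i j, ∫ X, (D X i j) ^ 2 ∂μ ≤ (∫ z, (g i j z) ^ 2 ∂P0) / n := by
      intro i j
      have h := var_mean P0 hn (g i j) (hg_meas i j) Bg (fun z => hg_bound i j z)
      simpa [hDdef, hμ] using h
    calc ∑ i, ∑ j, ∫ X, (D X i j) ^ 2 ∂μ
        ≤ ∑ i, ∑ j, (∫ z, (g i j z) ^ 2 ∂P0) / n :=
          Finset.sum_le_sum fun i _ => Finset.sum_le_sum fun j _ => hvar i j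
    _ = (∑ i, ∑ j, ∫ z, (g i j z) ^ 2 ∂P0) / n := by
          rw [Finset.sum_div]
          exact Finset.sum_congr rfl fun i _ => (Finset.sum_div _ _ _).symm
    _ = (∫ z, ∑ i, ∑ j, (g i j z) ^ 2 ∂P0) / n := by
          congr 1
          symm
          rw [integral_finset_sum _ fun i _ => integrable_finset_sum _ fun j _ => hg2_int i j]
          exact Finset.sum_congr rfl fun i _ => integral_finset_sum _ fun j _ => hg2_int i j
    _ ≤ (16 * K0 / t ^ 2 * p) / n := by
          have hpt : ∀ z : Vec d, ∑ i, ∑ j, (g i j z) ^ 2 ≤ 16 * K0 / t ^ 2 * k z := by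
            intro z
            have hsum : ∑ i, ∑ j, (g i j z) ^ 2
                = ((t ^ 2)⁻¹) ^ 2 * (k z) ^ 2 * (∑ i, ((z - x) i) ^ 2) ^ 2 := by
              simp only [hgdef]
              rw [sq (∑ i, ((z - x) i) ^ 2), Finset.sum_mul_sum, Finset.mul_sum]
              refine Finset.sum_congr rfl fun i _ => ?_
              rw [Finset.mul_sum]
              refine Finset.sum_congr rfl fun j _ => ?_
              ring
            rw [hsum, ← hnorm_sq]
            have h1 : (k z) ^ 2 * (‖z - x‖ ^ 2) ^ 2 ≤ k z * (K0 * (16 * t ^ 2)) := by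
              have h2 : (‖z - x‖ ^ 2) ^ 2 = ‖z - x‖ ^ 4 := by ring
              rw [h2, sq]
              calc k z * k z * ‖z - x‖ ^ 4 = k z * (k z * ‖z - x‖ ^ 4) := by ring
              _ ≤ k z * (K0 * (16 * t ^ 2)) :=
                  mul_le_mul_of_nonneg_left (hker2 z) (hk_nonneg z)
            calc ((t ^ 2)⁻¹) ^ 2 * (k z) ^ 2 * (‖z - x‖ ^ 2) ^ 2
                = ((t ^ 2)⁻¹) ^ 2 * ((k z) ^ 2 * (‖z - x‖ ^ 2) ^ 2) := by ring
            _ ≤ ((t ^ 2)⁻¹) ^ 2 * (k z * (K0 * (16 * t ^ 2))) :=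
                mul_le_mul_of_nonneg_left h1 (by positivity)
            _ = 16 * K0 / t ^ 2 * k z := by field_simp
          have hG2int : Integrable (fun z => ∑ i, ∑ j, (g i j z) ^ 2) P0 :=
            integrable_finset_sum _ fun i _ => integrable_finset_sum _ fun j _ => hg2_int i j
          have hmono : ∫ z, ∑ i, ∑ j, (g i j z) ^ 2 ∂P0 ≤ 16 * K0 / t ^ 2 * p := by
            calc ∫ z, ∑ i, ∑ j, (g i j z) ^ 2 ∂P0
                ≤ ∫ z, 16 * K0 / t ^ 2 * k z ∂P0 :=
                  integral_mono hG2int (hk_int.const_mul _) hpt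
            _ = 16 * K0 / t ^ 2 * p := by rw [integral_const_mul, hdens]
          exact (div_le_div_iff_of_pos_right hn0).mpr hmono
    _ = 16 * K0 * p / ((n:ℝ) * t ^ 2) := by
          rw [div_mul_eq_mul_div, div_div, mul_comm (t ^ 2) ((n:ℝ))]
  -- final assembly
  have hpow : (2 * π * t) ^ ((d:ℝ) / 2) = K0⁻¹ := by
    rw [hK0def, ← Real.rpow_neg h2πt.le]
    congr 1
    ring
  set R : ℝ := p / ((n:ℝ) * (2 * π * t) ^ ((d:ℝ) / 2)) with hRdef
  have hsqrt_eq : Real.sqrt (16 * K0 * p / ((n:ℝ) * t ^ 2)) = 4 * (1 / t) * Real.sqrt R := by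
    have h16 : 16 * K0 * p / ((n:ℝ) * t ^ 2) = (4 * (1 / t)) ^ 2 * R := by
      rw [hRdef, hpow]
      have hK0ne : K0 ≠ 0 := ne_of_gt hK0
      field_simp
      ring
    rw [h16, Real.sqrt_mul (by positivity), Real.sqrt_sq (by positivity)]
  have hT1_0 : (0:ℝ) ≤ 1 / ((n:ℝ) * (2 * π * t) ^ ((d:ℝ) / 2) * t) := by positivity
  calc ∫ X, ‖hHat t X x - hBar P0 t x‖ ∂μ
      ≤ ∫ X, Real.sqrt (F X) ∂μ :=
        integral_mono_of_nonneg (ae_of_all _ fun X => norm_nonneg _) hsqrtFint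
          (ae_of_all _ step1)
  _ ≤ Real.sqrt (∫ X, F X ∂μ) := integral_sqrt_le hFint hF0
  _ ≤ Real.sqrt (16 * K0 * p / ((n:ℝ) * t ^ 2)) := Real.sqrt_le_sqrt hIF
  _ = 4 * (1 / t) * Real.sqrt R := hsqrt_eq
  _ ≤ 4 * (1 / ((n:ℝ) * (2 * π * t) ^ ((d:ℝ) / 2) * t) + 1 / t * Real.sqrt R) := by
      have hsR : 0 ≤ Real.sqrt R := Real.sqrt_nonneg _
      have heq : 4 * (1 / t) * Real.sqrt R = 4 * (1 / t * Real.sqrt R) := by ring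
      rw [heq]
      linarith

end
end

section
/- There exists an absolute constant C_E > 0 such that for every x ∈ R^d, every t > 0, and every n ≥ 2, the Gaussian kernel density estimator built from n i.i.d. samples satisfies P{ |p̂_t(x) − p_t(x)| > C_E·( log n/(n(2πt)^{d/2}) + sqrt(p_t(x) log n/(n(2πt)^{d/2})) ) } ≲ n^{−10}, with an absolute implied constant. -/
open MeasureTheory ProbabilityTheory Real
open scoped InnerProductSpace ENNReal NNReal BigOperators

noncomputable section

-- auxiliary lemmas
lemma exp_interp {z u : ℝ} (h0 : 0 ≤ u) (h1 : u ≤ 1) :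
    Real.exp (z * u) ≤ 1 + u * (Real.exp z - 1) := by
  have h := convexOn_exp.2 (Set.mem_univ (0:ℝ)) (Set.mem_univ z)
    (by linarith : (0:ℝ) ≤ 1 - u) h0 (by ring)
  simp only [smul_eq_mul, mul_zero, zero_add, Real.exp_zero] at h
  calc Real.exp (z * u) = Real.exp (u * z) := by rw [mul_comm]
    _ ≤ (1 - u) * 1 + u * Real.exp z := h
    _ = 1 + u * (Real.exp z - 1) := by ring

lemma exp_up {lam u : ℝ} (hl0 : 0 ≤ lam) (hl1 : lam ≤ 1/2) (h0 : 0 ≤ u) (h1 : u ≤ 1) :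
    Real.exp (lam * u) ≤ 1 + (lam + 2*lam^2) * u := by
  have h2 : Real.exp lam - 1 ≤ lam + 2*lam^2 := by
    have ha : 1 - lam ≤ Real.exp (-lam) := by
      have := Real.add_one_le_exp (-lam); linarith
    have hb : Real.exp lam * Real.exp (-lam) = 1 := by
      rw [← Real.exp_add]; simp
    nlinarith [Real.exp_pos lam, Real.exp_pos (-lam), sq_nonneg lam]
  have := exp_interp (z := lam) h0 h1
  nlinarith [mul_le_mul_of_nonneg_left h2 h0]

lemma exp_dn {lam u : ℝ} (hl0 : 0 ≤ lam) (hl1 : lam ≤ 1) (h0 : 0 ≤ u) (h1 : u ≤ 1) :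
    Real.exp (-(lam * u)) ≤ 1 + (lam^2 - lam) * u := by
  have h2 : Real.exp (-lam) - 1 ≤ lam^2 - lam := by
    have ha : lam + 1 ≤ Real.exp lam := Real.add_one_le_exp lam
    have hb : Real.exp lam * Real.exp (-lam) = 1 := by
      rw [← Real.exp_add]; simp
    nlinarith [Real.exp_pos lam, Real.exp_pos (-lam)]
  have h3 : Real.exp (-(lam * u)) = Real.exp ((-lam) * u) := by ring_nf
  rw [h3]
  have := exp_interp (z := -lam) h0 h1
  nlinarith [mul_le_mul_of_nonneg_left h2 h0]

lemma mgf_factor {α : Type*} [MeasurableSpace α] (P : Measure α) [IsProbabilityMeasure P]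
    (f : α → ℝ) (hf : Measurable f) (M s c : ℝ) (hM : 0 < M)
    (h0 : ∀ y, 0 ≤ f y) (h1 : ∀ y, f y ≤ M)
    (hpt : ∀ u : ℝ, 0 ≤ u → u ≤ 1 → Real.exp (s * (M * u)) ≤ 1 + c * u) :
    ∫ y, Real.exp (s * f y) ∂P ≤ Real.exp (c * (∫ y, f y ∂P) / M) := by
  have hfint : Integrable f P := by
    refine (integrable_const M).mono' hf.aestronglyMeasurable (ae_of_all _ fun y => ?_)
    rw [Real.norm_eq_abs, abs_of_nonneg (h0 y)]; exact h1 y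
  have hpt' : ∀ y, Real.exp (s * f y) ≤ 1 + (c / M) * f y := fun y => by
    have := hpt (f y / M) (div_nonneg (h0 y) hM.le) ((div_le_one hM).2 (h1 y))
    rw [mul_div_cancel₀ _ hM.ne'] at this
    calc Real.exp (s * f y) ≤ 1 + c * (f y / M) := this
      _ = 1 + (c / M) * f y := by ring
  have hexint : Integrable (fun y => Real.exp (s * f y)) P := by
    refine (integrable_const (Real.exp (|s| * M))).mono'
      ((Real.measurable_exp.comp (hf.const_mul s)).aestronglyMeasurable)
      (ae_of_all _ fun y => ?_)
    rw [Real.norm_eq_abs, abs_of_nonneg (Real.exp_nonneg _)]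
    apply Real.exp_le_exp.2
    calc s * f y ≤ |s * f y| := le_abs_self _
      _ = |s| * |f y| := abs_mul _ _
      _ ≤ |s| * M := by
          apply mul_le_mul_of_nonneg_left _ (abs_nonneg s)
          rw [abs_of_nonneg (h0 y)]; exact h1 y
  have hint2 : Integrable (fun y => 1 + (c / M) * f y) P :=
    (integrable_const 1).add (hfint.const_mul _)
  calc ∫ y, Real.exp (s * f y) ∂P ≤ ∫ y, (1 + (c / M) * f y) ∂P :=
        integral_mono hexint hint2 hpt'
    _ = 1 + (c / M) * ∫ y, f y ∂P := by
        rw [integral_add (integrable_const 1) (hfint.const_mul _),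
          MeasureTheory.integral_const_mul]
        simp
    _ ≤ Real.exp ((c / M) * ∫ y, f y ∂P) := by
        have := Real.add_one_le_exp ((c / M) * ∫ y, f y ∂P); linarith
    _ = Real.exp (c * (∫ y, f y ∂P) / M) := by rw [div_mul_eq_mul_div]

lemma chernoff_pi {α : Type*} [MeasurableSpace α] (P : Measure α) [IsProbabilityMeasure P]
    (n : ℕ) (f : α → ℝ) (hf : Measurable f) (Mb : ℝ) (hbd : ∀ y, |f y| ≤ Mb)
    (s a B : ℝ) (hB : ∫ y, Real.exp (s * f y) ∂P ≤ Real.exp B) :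
    (Measure.pi fun _ : Fin n => P) {X | a ≤ ∑ i, s * f (X i)} ≤
      ENNReal.ofReal (Real.exp ((n : ℝ) * B - a)) := by
  letI : MeasureSpace α := ⟨P⟩
  haveI : SigmaFinite (volume : Measure α) := inferInstanceAs (SigmaFinite P)
  have hg : Integrable (fun y => Real.exp (s * f y)) P := by
    refine (integrable_const (Real.exp (|s| * Mb))).mono'
      ((Real.measurable_exp.comp (hf.const_mul s)).aestronglyMeasurable)
      (ae_of_all _ fun y => ?_)
    rw [Real.norm_eq_abs, abs_of_nonneg (Real.exp_nonneg _)]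
    apply Real.exp_le_exp.2
    calc s * f y ≤ |s * f y| := le_abs_self _
      _ = |s| * |f y| := abs_mul _ _
      _ ≤ |s| * Mb := mul_le_mul_of_nonneg_left (hbd y) (abs_nonneg s)
  have hG : Integrable (fun X : Fin n → α => ∏ i, Real.exp (s * f (X i)))
      (Measure.pi fun _ : Fin n => P) := by
    rw [show (Measure.pi fun _ : Fin n => P) = (volume : Measure (Fin n → α)) from
      (volume_pi).symm]
    exact Integrable.fintype_prod (f := fun _ y => Real.exp (s * f y)) (fun _ => hg)
  have hprod : ∫ X : Fin n → α, ∏ i, Real.exp (s * f (X i))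
      ∂(Measure.pi fun _ : Fin n => P) = (∫ y, Real.exp (s * f y) ∂P) ^ n := by
    rw [show (Measure.pi fun _ : Fin n => P) = (volume : Measure (Fin n → α)) from
      (volume_pi).symm]
    rw [volume_pi, integral_fintype_prod_eq_pow (𝕜 := ℝ) (fun y => Real.exp (s * f y))]
    rw [Fintype.card_fin]
    rfl
  have hmarkov := mul_meas_ge_le_integral_of_nonneg
    (μ := Measure.pi fun _ : Fin n => P)
    (f := fun X : Fin n → α => ∏ i, Real.exp (s * f (X i)))
    (ae_of_all _ fun X => Finset.prod_nonneg fun i _ => (Real.exp_nonneg _))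
    hG (Real.exp a)
  have hset : {X : Fin n → α | Real.exp a ≤ ∏ i, Real.exp (s * f (X i))}
      = {X | a ≤ ∑ i, s * f (X i)} := by
    ext X
    simp only [Set.mem_setOf_eq]
    rw [← Real.exp_sum]
    exact Real.exp_le_exp
  rw [hset, hprod] at hmarkov
  have hpow : (∫ y, Real.exp (s * f y) ∂P) ^ n ≤ Real.exp ((n:ℝ) * B) := by
    calc (∫ y, Real.exp (s * f y) ∂P) ^ n ≤ (Real.exp B) ^ n := by
          apply pow_le_pow_left₀ (integral_nonneg fun y => Real.exp_nonneg _) hB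
      _ = Real.exp ((n:ℝ) * B) := by rw [← Real.exp_nat_mul]
  have hfin : (Measure.pi fun _ : Fin n => P) {X | a ≤ ∑ i, s * f (X i)} ≠ ⊤ :=
    measure_ne_top _ _
  rw [ENNReal.le_ofReal_iff_toReal_le hfin (Real.exp_nonneg _)]
  have h2 : Real.exp a * ((Measure.pi fun _ : Fin n => P)
      {X | a ≤ ∑ i, s * f (X i)}).toReal ≤ Real.exp ((n:ℝ) * B) := le_trans hmarkov hpow
  have h3 : Real.exp ((n:ℝ) * B) = Real.exp a * Real.exp ((n:ℝ) * B - a) := by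
    rw [← Real.exp_add]; ring_nf
  rw [h3] at h2
  exact le_of_mul_le_mul_left h2 (Real.exp_pos a)

lemma key_ineq_s13 {eta mu eps : ℝ} (heta : 0 ≤ eta) (hmu0 : 0 ≤ mu) (heps : 0 ≤ eps)
    (heps1 : 40*eta ≤ eps) (heps2 : 1600*(mu*eta) ≤ eps^2) :
    10*eta*(2*eps+8*mu)^2 ≤ eps^2*(2*eps+6*mu) := by
  nlinarith [mul_le_mul_of_nonneg_right heps1 (sq_nonneg eps),
    mul_le_mul_of_nonneg_right heps2 heps,
    mul_le_mul_of_nonneg_right heps2 hmu0,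
    mul_nonneg (mul_nonneg heps heps) heps, mul_nonneg (mul_nonneg heps heps) hmu0]

set_option maxHeartbeats 1000000 in
/-- Lemma: concentration of the kernel density estimator.
There is an absolute constant `C_E > 0` such that the probability that
`|p̂_t(x) − p_t(x)|` exceeds `C_E (log n/(n(2πt)^{d/2}) + sqrt(p_t(x) log n/(n(2πt)^{d/2})))`
is `≲ n^{−10}`, with an absolute implied constant. -/
theorem statement_13 :
    ∃ CE C : ℝ, 0 < CE ∧ 0 < C ∧
      ∀ (d n : ℕ) (t : ℝ) (P0 : Measure (Vec d)) (x : Vec d),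
        2 ≤ n → 0 < t → IsProbabilityMeasure P0 →
        (Measure.pi fun _ : Fin n => P0)
            {X | CE * (Real.log n / (n * (2 * π * t) ^ ((d : ℝ) / 2)) +
                Real.sqrt (densVE P0 t x * Real.log n / (n * (2 * π * t) ^ ((d : ℝ) / 2)))) <
              |kde t X x - densVE P0 t x|}
          ≤ ENNReal.ofReal (C * (n : ℝ) ^ (-(10 : ℝ))) := by
  refine ⟨40, 2, by norm_num, by norm_num, ?_⟩
  intro d n t P0 x hn ht hP
  haveI := hP
  set A := (2 * π * t) ^ ((d:ℝ)/2) with hAdef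
  have hA : 0 < A := Real.rpow_pos_of_pos (by positivity) _
  set M := A⁻¹ with hMdef
  have hM : 0 < M := inv_pos.2 hA
  set f : Vec d → ℝ := fun y => gaussKernel d t (y - x) with hfdef
  have hfc : Continuous f := by
    simp only [hfdef, gaussKernel]
    fun_prop
  have h0 : ∀ y, 0 ≤ f y := fun y => by
    simp only [hfdef, gaussKernel]
    positivity
  have h1 : ∀ y, f y ≤ M := fun y => by
    simp only [hfdef, gaussKernel]
    have h2 : (2*π*t) ^ (-(d:ℝ)/2) = M := by
      rw [hMdef, hAdef, neg_div, Real.rpow_neg (by positivity)]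
    rw [h2]
    apply mul_le_of_le_one_right hM.le
    rw [Real.exp_le_one_iff]
    apply div_nonpos_of_nonpos_of_nonneg
    · simp [sq_nonneg]
    · positivity
  have habs : ∀ y, |f y| ≤ M := fun y => by
    rw [abs_of_nonneg (h0 y)]; exact h1 y
  have hfint : Integrable f P0 := by
    refine (integrable_const M).mono' hfc.measurable.aestronglyMeasurable
      (ae_of_all _ fun y => ?_)
    rw [Real.norm_eq_abs]; exact habs y
  set mu := ∫ y, f y ∂P0 with hmudef
  have hdens : densVE P0 t x = mu := by
    unfold densVE
    refine integral_congr_ae (ae_of_all _ fun y => ?_)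
    simp only [hfdef, gaussKernel, norm_sub_rev x y]
  have hmu0 : 0 ≤ mu := integral_nonneg h0
  have hmuM : mu ≤ M := by
    have := integral_mono hfint (integrable_const M) h1
    simpa using this
  have hn0 : (0:ℝ) < n := by
    have : 0 < n := lt_of_lt_of_le (by norm_num) hn
    exact_mod_cast this
  have hl : 0 < Real.log n := Real.log_pos (by exact_mod_cast lt_of_lt_of_le one_lt_two hn)
  set l := Real.log n with hldef
  set eta := l / (n * A) with hetadef
  have heta : 0 < eta := div_pos hl (by positivity)
  set eps := 40 * (eta + Real.sqrt (mu * eta)) with hepsdef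
  have hsq : 0 ≤ Real.sqrt (mu * eta) := Real.sqrt_nonneg _
  have heps : 0 < eps := by nlinarith
  have heps1 : 40 * eta ≤ eps := by nlinarith
  have heps2 : 1600 * (mu * eta) ≤ eps^2 := by
    have h : Real.sqrt (mu*eta) ^ 2 = mu*eta := Real.sq_sqrt (by positivity)
    nlinarith [heta.le, hmu0]
  set lam := eps / (2*eps + 8*mu) with hlamdef
  have hD : 0 < 2*eps + 8*mu := by nlinarith
  have hlam0 : 0 ≤ lam := le_of_lt (div_pos heps hD)
  have hlamhalf : lam ≤ 1/2 := by
    rw [hlamdef, div_le_iff₀ hD]; nlinarith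
  have key : 10 * eta ≤ lam * eps - 2 * lam^2 * mu := by
    have hexp : lam * eps - 2*lam^2*mu = eps^2*(2*eps+6*mu)/(2*eps+8*mu)^2 := by
      rw [hlamdef]; field_simp; ring
    rw [hexp, le_div_iff₀ (by positivity)]
    exact key_ineq_s13 heta.le hmu0 heps.le heps1 heps2
  have key2 : 10 * l ≤ (n*A) * (lam*eps - 2*lam^2*mu) := by
    have hl_eq : l = eta * (n*A) := by
      rw [hetadef, div_mul_cancel₀]
      positivity
    have := mul_le_mul_of_nonneg_left key (show (0:ℝ) ≤ n*A by positivity)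
    calc 10 * l = (n*A) * (10*eta) := by rw [hl_eq]; ring
      _ ≤ (n*A) * (lam*eps - 2*lam^2*mu) := this
  -- upper tail
  have hptU : ∀ u : ℝ, 0 ≤ u → u ≤ 1 →
      Real.exp ((lam * A) * (M * u)) ≤ 1 + (lam + 2*lam^2) * u := by
    intro u h0u h1u
    have he : (lam * A) * (M * u) = lam * u := by
      rw [hMdef]; field_simp
    rw [he]
    exact exp_up hlam0 hlamhalf h0u h1u
  have hBU := mgf_factor P0 f hfc.measurable M (lam*A) (lam + 2*lam^2) hM h0 h1 hptU
  have tailU := chernoff_pi P0 n f hfc.measurable M habs (lam*A)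
    ((lam*A)*(n*(mu+eps))) ((lam + 2*lam^2) * mu / M) (by rw [← hmudef] at hBU; exact hBU)
  -- lower tail
  have hptL : ∀ u : ℝ, 0 ≤ u → u ≤ 1 →
      Real.exp ((-(lam * A)) * (M * u)) ≤ 1 + (lam^2 - lam) * u := by
    intro u h0u h1u
    have he : (-(lam * A)) * (M * u) = -(lam * u) := by
      rw [hMdef]; field_simp
    rw [he]
    exact exp_dn hlam0 (by linarith) h0u h1u
  have hBL := mgf_factor P0 f hfc.measurable M (-(lam*A)) (lam^2 - lam) hM h0 h1 hptL
  have tailL := chernoff_pi P0 n f hfc.measurable M habs (-(lam*A))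
    ((-(lam*A))*(n*(mu-eps))) ((lam^2 - lam) * mu / M) (by rw [← hmudef] at hBL; exact hBL)
  -- exponent bounds
  have hrpow : Real.exp (-(10*l)) = (n:ℝ) ^ (-(10:ℝ)) := by
    rw [Real.rpow_def_of_pos hn0, hldef]
    congr 1
    ring
  have heU : (n:ℝ) * ((lam + 2*lam^2) * mu / M) - (lam*A)*((n:ℝ)*(mu+eps)) ≤ -(10*l) := by
    have he : (n:ℝ) * ((lam + 2*lam^2) * mu / M) - (lam*A)*((n:ℝ)*(mu+eps))
        = -((n*A) * (lam*eps - 2*lam^2*mu)) := by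
      rw [hMdef]; field_simp; ring
    rw [he]
    linarith
  have heL : (n:ℝ) * ((lam^2 - lam) * mu / M) - (-(lam*A))*((n:ℝ)*(mu-eps)) ≤ -(10*l) := by
    have he : (n:ℝ) * ((lam^2 - lam) * mu / M) - (-(lam*A))*((n:ℝ)*(mu-eps))
        = (n*A) * (lam^2*mu - lam*eps) := by
      rw [hMdef]; field_simp; ring
    rw [he]
    nlinarith [key2, mul_nonneg (mul_nonneg (mul_nonneg hn0.le hA.le) (sq_nonneg lam)) hmu0]
  have tailU' : (Measure.pi fun _ : Fin n => P0)
      {X | (lam*A)*((n:ℝ)*(mu+eps)) ≤ ∑ i, (lam*A) * f (X i)}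
      ≤ ENNReal.ofReal ((n:ℝ) ^ (-(10:ℝ))) := by
    refine le_trans tailU (ENNReal.ofReal_le_ofReal ?_)
    rw [← hrpow]
    exact Real.exp_le_exp.2 heU
  have tailL' : (Measure.pi fun _ : Fin n => P0)
      {X | (-(lam*A))*((n:ℝ)*(mu-eps)) ≤ ∑ i, (-(lam*A)) * f (X i)}
      ≤ ENNReal.ofReal ((n:ℝ) ^ (-(10:ℝ))) := by
    refine le_trans tailL (ENNReal.ofReal_le_ofReal ?_)
    rw [← hrpow]
    exact Real.exp_le_exp.2 heL
  -- event inclusion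
  have hsub : {X : Fin n → Vec d | 40 * (Real.log n / (n * A) +
      Real.sqrt (densVE P0 t x * Real.log n / (n * A))) <
        |kde t X x - densVE P0 t x|} ⊆
      {X | (lam*A)*((n:ℝ)*(mu+eps)) ≤ ∑ i, (lam*A) * f (X i)} ∪
      {X | (-(lam*A))*((n:ℝ)*(mu-eps)) ≤ ∑ i, (-(lam*A)) * f (X i)} := by
    intro X hX
    simp only [Set.mem_setOf_eq] at hX
    have hthr : 40 * (Real.log n / (n * A) +
        Real.sqrt (densVE P0 t x * Real.log n / (n * A))) = eps := by
      rw [hdens, mul_div_assoc, hepsdef, hetadef, hldef]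
    rw [hthr, hdens] at hX
    have hkde : kde t X x = (n:ℝ)⁻¹ * ∑ i, f (X i) := rfl
    rw [hkde] at hX
    set S := ∑ i, f (X i) with hSdef
    have hsA : 0 ≤ lam * A := mul_nonneg hlam0 hA.le
    rcases lt_abs.mp hX with hc | hc
    · left
      have h2 : (n:ℝ)*(mu+eps) ≤ (n:ℝ)*((n:ℝ)⁻¹*S) :=
        mul_le_mul_of_nonneg_left (by linarith) hn0.le
      have h3 : (n:ℝ)*((n:ℝ)⁻¹*S) = S := by field_simp
      show (lam*A)*((n:ℝ)*(mu+eps)) ≤ ∑ i, (lam*A) * f (X i)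
      rw [← Finset.mul_sum, ← hSdef]
      exact mul_le_mul_of_nonneg_left (h3 ▸ h2) hsA
    · right
      have h2 : (n:ℝ)*((n:ℝ)⁻¹*S) ≤ (n:ℝ)*(mu-eps) :=
        mul_le_mul_of_nonneg_left (by linarith) hn0.le
      have h3 : (n:ℝ)*((n:ℝ)⁻¹*S) = S := by field_simp
      show (-(lam*A))*((n:ℝ)*(mu-eps)) ≤ ∑ i, (-(lam*A)) * f (X i)
      rw [← Finset.mul_sum, ← hSdef]
      exact mul_le_mul_of_nonpos_left (h3 ▸ h2) (by linarith)
  refine le_trans (measure_mono hsub) (le_trans (measure_union_le _ _) ?_)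
  refine le_trans (add_le_add tailU' tailL') ?_
  rw [← ENNReal.ofReal_add (by positivity) (by positivity)]
  apply ENNReal.ofReal_le_ofReal
  apply le_of_eq
  ring

end
end
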